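/- arXiv:math/0512369 — 5 statements merged into one kernel-verified Lean document; each statement's English description precedes it below -/
import Mathlib

section
/- The number of m-colored compositions of n is m * (m+1)^(n-1) for n ≥ 1. Formally, the set of pairs (α, c) where α is a composition of n (a list of positive integers summing to n) and c is a function assigning to each part of α one of m colors, has cardinality m * (m+1)^(n-1). -/
/-!
Cutting `n` into consecutive blocks amounts to choosing which of the `n - 1` gaps between
neighbouring units are cuts, and `k` cuts give `k + 1` blocks. Colouring every block in one of
`m` colours, the count is `∑ₖ (n-1 choose k) m ^ (k + 1) = m (m + 1) ^ (n - 1)`.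
-/

open Finset

theorem compositionAsSetEquiv_symm_boundaries {n : ℕ} (s : Finset (Fin (n - 1))) :
    ((compositionAsSetEquiv n).symm s).boundaries =
      insert 0 (insert (Fin.last n) (s.map ((Fin.castLEEmb (by omega)).trans (Fin.succEmb n)))) := by
  ext i
  simp only [compositionAsSetEquiv, Equiv.coe_fn_symm_mk, Set.toFinset_ofPred, mem_filter_univ,
    mem_insert, mem_map, exists_prop, Function.Embedding.trans_apply, Fin.ext_iff,
    Fin.coe_castLEEmb, Fin.coe_succEmb, Fin.val_succ, Fin.val_castLE, @eq_comm _ _ (i : ℕ)]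

theorem compositionAsSetEquiv_symm_length {n : ℕ} (hn : 0 < n) (s : Finset (Fin (n - 1))) :
    ((compositionAsSetEquiv n).symm s).length = #s + 1 := by
  rw [CompositionAsSet.length, compositionAsSetEquiv_symm_boundaries,
    card_insert_of_notMem, card_insert_of_notMem, card_map]
  · simp
  · simp [Fin.ext_iff]; omega
  · simp [Fin.ext_iff]; omega

theorem Composition.sum_pow_length {R : Type*} [CommSemiring R] {n : ℕ} (hn : 0 < n) (x : R) :
    ∑ c : Composition n, x ^ c.length = x * (x + 1) ^ (n - 1) := by
  rw [← (compositionEquiv n).symm.sum_comp, ← (compositionAsSetEquiv n).symm.sum_comp,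
    ← Fin.sum_pow_mul_eq_add_pow, mul_sum]
  refine sum_congr rfl fun s _ => ?_
  simp only [compositionEquiv, Equiv.coe_fn_symm_mk, CompositionAsSet.toComposition_length,
    compositionAsSetEquiv_symm_length hn, one_pow, mul_one, pow_succ']

def Composition.equivSubtype (n : ℕ) :
    Composition n ≃ {l : List ℕ // (∀ x ∈ l, 0 < x) ∧ l.sum = n} where
  toFun c := ⟨c.blocks, fun _ => c.blocks_pos, c.blocks_sum⟩
  invFun l := ⟨l.1, l.2.1 _, l.2.2⟩

abbrev ColoredComposition (α : Type*) (n : ℕ) : Type _ :=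
  Σ c : Composition n, Fin c.length → α

namespace ColoredComposition

variable (α : Type*) (n : ℕ)

def equivSubtype :
    ColoredComposition α n ≃
      {p : Σ l : List ℕ, Fin l.length → α // (∀ x ∈ p.1, 0 < x) ∧ p.1.sum = n} :=
  (Equiv.sigmaCongrLeft (β := fun c : Composition n => Fin c.length → α)
    (Composition.equivSubtype n).symm).symm.trans
    (Equiv.subtypeSigmaEquiv (fun l : List ℕ => Fin l.length → α)
      fun l => (∀ x ∈ l, 0 < x) ∧ l.sum = n).symm

variable [Finite α]

theorem card_eq_sum :
    Nat.card (ColoredComposition α n) = ∑ c : Composition n, Nat.card α ^ c.length := by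
  simp only [Nat.card_sigma, Nat.card_fun, Nat.card_fin]

theorem card (hn : 0 < n) :
    Nat.card (ColoredComposition α n) = Nat.card α * (Nat.card α + 1) ^ (n - 1) := by
  rw [card_eq_sum, Composition.sum_pow_length hn]

end ColoredComposition

theorem card_colored_compositions_general (n m : ℕ) (hn : 1 ≤ n) :
    Nat.card {p : Σ α : List ℕ, Fin α.length → Fin m //
        (∀ x ∈ p.1, 0 < x) ∧ p.1.sum = n} = m * (m + 1) ^ (n - 1) := by
  rw [← Nat.card_congr (ColoredComposition.equivSubtype (Fin m) n), ColoredComposition.card _ _ hn,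
    Nat.card_fin]

/-- The number of `m`-colored compositions of `n` is `m * (m+1)^(n-1)` for `n ≥ 1`:
pairs of a composition `α` of `n` (a list of positive integers summing to `n`)
together with a function assigning one of `m` colors to each part. -/
theorem card_colored_compositions (n m : ℕ) (hn : 1 ≤ n) (hm : 1 ≤ m) :
    Nat.card {p : Σ α : List ℕ, Fin α.length → Fin m //
        (∀ x ∈ p.1, 0 < x) ∧ p.1.sum = n} = m * (m + 1) ^ (n - 1) :=
  card_colored_compositions_general n m hn
end

section
/- Every m-colored composition α of n (for n ≥ 1) is covered by exactly m*(n+1) m-colored compositions of n+1 in the colored composition poset Co^(m). -/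
/-- `CCover m α β` means `β` covers `α` in the poset `Co^(m)` of `m`-colored
compositions (parts are pairs (color, size)).  The covers of `∅` are the `m`
one-part compositions of `1`; otherwise `β` is obtained from `α` by
(1) adding `1` to a part keeping its color, (2) adding `1` to a part and
splitting it into two parts of the same color, or (3) splitting a part of color
`c` into `(c,h), (c',1), (c,a-h)` with `c' ≠ c`, parts of size `0` being
deleted. -/
def CCover (m : ℕ) (α β : List (Fin m × ℕ)) : Prop :=
  (α = [] ∧ ∃ c : Fin m, β = [(c, 1)]) ∨
  (∃ (l r : List (Fin m × ℕ)) (c : Fin m) (a : ℕ),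
      α = l ++ (c, a) :: r ∧ β = l ++ (c, a + 1) :: r) ∨
  (∃ (l r : List (Fin m × ℕ)) (c : Fin m) (a h : ℕ), h < a ∧
      α = l ++ (c, a) :: r ∧ β = l ++ (c, h + 1) :: (c, a - h) :: r) ∨
  (∃ (l r : List (Fin m × ℕ)) (c c' : Fin m) (a h : ℕ), c' ≠ c ∧ h ≤ a ∧
      α = l ++ (c, a) :: r ∧
      β = l ++ ((if h = 0 then [] else [(c, h)]) ++ (c', 1) ::
            (if h = a then [] else [(c, a - h)])) ++ r)

namespace CCAux
variable {m : ℕ}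
def sumL (l : List (Fin m × ℕ)) : ℕ := (l.map Prod.snd).sum
@[simp] lemma sumL_nil : sumL ([] : List (Fin m × ℕ)) = 0 := rfl
@[simp] lemma sumL_cons (x : Fin m × ℕ) (l : List (Fin m × ℕ)) :
    sumL (x :: l) = x.2 + sumL l := by simp [sumL]
@[simp] lemma sumL_append (l r : List (Fin m × ℕ)) :
    sumL (l ++ r) = sumL l + sumL r := by simp [sumL]
def fIns : List (Fin m × ℕ) → Fin m → ℕ → List (Fin m × ℕ)
  | [], c, _ => [(c, 1)]
  | (d, a) :: γ, c, p =>
    if c = d then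
      if p < a then (d, p + 1) :: (d, a - p) :: γ
      else if p = a then (d, a + 1) :: γ
      else (d, a) :: fIns γ c (p - a)
    else
      if p < a then
        if p = 0 then (c, 1) :: (d, a) :: γ
        else (d, p) :: (c, 1) :: (d, a - p) :: γ
      else (d, a) :: fIns γ c (p - a)

@[simp] lemma fIns_nil (c : Fin m) (p : ℕ) : fIns [] c p = [(c, 1)] := rfl

lemma fIns_zero (γ : List (Fin m × ℕ)) (c : Fin m) (hpos : ∀ x ∈ γ, 0 < x.2) :
    fIns γ c 0 = (c, 1) :: γ := by
  cases γ with
  | nil => rfl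
  | cons x γ =>
    obtain ⟨d, a⟩ := x
    have ha : 0 < a := hpos (d, a) (by simp)
    by_cases hc : c = d <;> simp [fIns, hc, ha]

variable {γ : List (Fin m × ℕ)} {c d : Fin m} {p a : ℕ}

lemma fc1 (hc : c = d) (h : p < a) :
    fIns ((d, a) :: γ) c p = (d, p + 1) :: (d, a - p) :: γ := by
  simp [fIns, hc, h]
lemma fc2 (hc : c = d) (h : p = a) :
    fIns ((d, a) :: γ) c p = (d, a + 1) :: γ := by
  simp [fIns, hc, h]
lemma fc3 (hc : c = d) (h : a < p) :
    fIns ((d, a) :: γ) c p = (d, a) :: fIns γ c (p - a) := by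
  have h1 : ¬ p < a := by omega
  have h2 : ¬ p = a := by omega
  simp [fIns, hc, h1, h2]
lemma fc4 (hc : ¬ c = d) (h : p = 0) (ha : 0 < a) :
    fIns ((d, a) :: γ) c p = (c, 1) :: (d, a) :: γ := by
  subst h; simp [fIns, hc, ha]
lemma fc5 (hc : ¬ c = d) (h0 : 0 < p) (h : p < a) :
    fIns ((d, a) :: γ) c p = (d, p) :: (c, 1) :: (d, a - p) :: γ := by
  have : ¬ p = 0 := by omega
  simp [fIns, hc, h, this]
lemma fc6 (hc : ¬ c = d) (h : a ≤ p) :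
    fIns ((d, a) :: γ) c p = (d, a) :: fIns γ c (p - a) := by
  have h1 : ¬ p < a := by omega
  simp [fIns, hc, h1]

lemma fc3' {c d : Fin m} {p a : ℕ} {γ : List (Fin m × ℕ)} (h : a < p) :
    fIns ((d, a) :: γ) c p = (d, a) :: fIns γ c (p - a) := by
  by_cases hc : c = d
  · exact fc3 hc h
  · exact fc6 hc (by omega)

lemma fIns_append (l γ : List (Fin m × ℕ)) (c : Fin m) (q : ℕ) (hq : 1 ≤ q) :
    fIns (l ++ γ) c (sumL l + q) = l ++ fIns γ c q := by
  induction l with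
  | nil => simp
  | cons x l ih =>
    obtain ⟨d, a⟩ := x
    have hs : sumL ((d, a) :: l) + q = a + (sumL l + q) := by simp; omega
    rw [List.cons_append, hs, fc3' (by omega)]
    have h3 : a + (sumL l + q) - a = sumL l + q := by omega
    rw [h3, ih, List.cons_append]

lemma fIns_append0 (l : List (Fin m × ℕ)) (e : Fin m) (b : ℕ)
    (γ : List (Fin m × ℕ)) (c : Fin m) (hc : c ≠ e) (hb : 1 ≤ b) :
    fIns (l ++ (e, b) :: γ) c (sumL l + b) = l ++ (e, b) :: fIns γ c 0 := by
  induction l with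
  | nil =>
    rw [List.nil_append, sumL_nil, Nat.zero_add, fc6 hc (le_refl b)]
    have h0 : b - b = 0 := by omega
    rw [h0, List.nil_append]
  | cons x l ih =>
    obtain ⟨d, a⟩ := x
    have hs : sumL ((d, a) :: l) + b = a + (sumL l + b) := by simp; omega
    rw [List.cons_append, hs, fc3' (by omega)]
    have h3 : a + (sumL l + b) - a = sumL l + b := by omega
    rw [h3, ih, List.cons_append]


/-- L1 -/
lemma ne_insert_other (γ : List (Fin m × ℕ)) (c d : Fin m) (q : ℕ) (hcd : c ≠ d) :
    fIns γ c q ≠ (d, 1) :: γ := by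
  induction γ generalizing q with
  | nil => simp [fIns, hcd]
  | cons x γ ih =>
    obtain ⟨e, b⟩ := x
    by_cases hc : c = e
    · rcases lt_trichotomy q b with h | h | h
      · rw [fc1 hc h]; subst hc
        intro hEq; simp only [List.cons.injEq, Prod.mk.injEq] at hEq; obtain ⟨⟨rfl, -⟩, -⟩ := hEq; exact hcd rfl
      · rw [fc2 hc h]; subst hc
        intro hEq; simp only [List.cons.injEq, Prod.mk.injEq] at hEq; obtain ⟨⟨rfl, -⟩, -⟩ := hEq; exact hcd rfl
      · rw [fc3 hc h]; subst hc
        intro hEq; simp only [List.cons.injEq, Prod.mk.injEq] at hEq; obtain ⟨⟨rfl, -⟩, -⟩ := hEq; exact hcd rfl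
    · rcases Nat.eq_zero_or_pos q with h0 | h0
      · by_cases hb : 0 < b
        · rw [fc4 hc h0 hb]
          intro hEq; simp only [List.cons.injEq, Prod.mk.injEq] at hEq; obtain ⟨⟨rfl, -⟩, -⟩ := hEq; exact hcd rfl
        · have hb0 : b = 0 := by omega
          have h : b ≤ q := by omega
          rw [fc6 hc h]
          intro hEq
          simp only [List.cons.injEq, Prod.mk.injEq] at hEq
          obtain ⟨⟨he, hb1⟩, htl⟩ := hEq
          subst he; subst hb1
          exact ih _ htl
      · rcases lt_or_ge q b with h | h
        · rw [fc5 hc h0 h]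
          intro hEq; simp only [List.cons.injEq, Prod.mk.injEq] at hEq; obtain ⟨⟨rfl, -⟩, ⟨he, -⟩, -⟩ := hEq; exact hc he
        · rw [fc6 hc h]
          intro hEq
          simp only [List.cons.injEq, Prod.mk.injEq] at hEq
          obtain ⟨⟨he, hb1⟩, htl⟩ := hEq
          subst he; subst hb1
          exact ih _ htl

/-- L2 -/
lemma ne_insert_same (γ : List (Fin m × ℕ)) (d : Fin m) (q : ℕ) (hq : 1 ≤ q)
    (hqs : q ≤ sumL γ) (hpos : ∀ x ∈ γ, 0 < x.2) :
    fIns γ d q ≠ (d, 1) :: γ := by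
  induction γ generalizing q with
  | nil => simp at hqs; omega
  | cons x γ ih =>
    obtain ⟨e, b⟩ := x
    have hb : 0 < b := hpos (e, b) (by simp)
    have hγpos : ∀ x ∈ γ, 0 < x.2 := fun x hx => hpos x (List.mem_cons_of_mem _ hx)
    have hqs' : q ≤ b + sumL γ := by simpa using hqs
    by_cases hc : d = e
    · subst hc
      rcases lt_trichotomy q b with h | h | h
      · rw [fc1 rfl h]
        intro hEq; simp only [List.cons.injEq, Prod.mk.injEq] at hEq; obtain ⟨⟨-, h1⟩, -⟩ := hEq; omega
      · rw [fc2 rfl h]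
        intro hEq; simp only [List.cons.injEq, Prod.mk.injEq] at hEq; obtain ⟨⟨-, h1⟩, -⟩ := hEq; omega
      · rw [fc3 rfl h]
        intro hEq
        simp only [List.cons.injEq, Prod.mk.injEq] at hEq
        obtain ⟨⟨-, hb1⟩, htl⟩ := hEq
        subst hb1
        exact ih (q - 1) (by omega) (by omega) hγpos htl
    · rcases lt_or_ge q b with h | h
      · rw [fc5 (fun he => hc he) hq h]
        intro hEq; simp only [List.cons.injEq, Prod.mk.injEq] at hEq; obtain ⟨⟨he, -⟩, -⟩ := hEq; exact hc he.symm
      · rw [fc6 (fun he => hc he) h]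
        intro hEq; simp only [List.cons.injEq, Prod.mk.injEq] at hEq; obtain ⟨⟨he, -⟩, -⟩ := hEq; exact hc he.symm


lemma fIns_inj (γ : List (Fin m × ℕ)) : ∀ (c c' : Fin m) (p p' : ℕ),
    (∀ x ∈ γ, 0 < x.2) → p ≤ sumL γ → p' ≤ sumL γ →
    fIns γ c p = fIns γ c' p' → c = c' ∧ p = p' := by
  induction γ with
  | nil =>
    intro c c' p p' _ hp hp' hEq
    simp only [sumL_nil, Nat.le_zero] at hp hp'
    simp only [fIns_nil, List.cons.injEq, Prod.mk.injEq] at hEq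
    exact ⟨hEq.1.1, by omega⟩
  | cons x γ ih =>
    obtain ⟨d, a⟩ := x
    intro c c' p p' hpos hp hp' hEq
    have ha : 0 < a := hpos (d, a) (by simp)
    have hγpos : ∀ x ∈ γ, 0 < x.2 := fun x hx => hpos x (List.mem_cons_of_mem _ hx)
    have hp2 : p ≤ a + sumL γ := by simpa using hp
    have hp2' : p' ≤ a + sumL γ := by simpa using hp'
    by_cases hc : c = d
    · rcases lt_trichotomy p a with h1 | h1 | h1
      · rw [fc1 hc h1] at hEq
        by_cases hc' : c' = d
        · rcases lt_trichotomy p' a with h1' | h1' | h1'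
          · rw [fc1 hc' h1'] at hEq
            simp only [List.cons.injEq, Prod.mk.injEq] at hEq
            obtain ⟨⟨-, e1⟩, -⟩ := hEq
            exact ⟨hc.trans hc'.symm, by omega⟩
          · rw [fc2 hc' h1'] at hEq
            simp only [List.cons.injEq, Prod.mk.injEq] at hEq
            obtain ⟨⟨-, e1⟩, -⟩ := hEq
            exact False.elim (by omega)
          · rw [fc3 hc' h1'] at hEq
            simp only [List.cons.injEq, Prod.mk.injEq] at hEq
            obtain ⟨⟨-, e1⟩, e2⟩ := hEq
            have e3 : a - p = 1 := by omega
            rw [e3, hc'] at e2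
            exact False.elim (ne_insert_same γ d (p' - a) (by omega) (by omega) hγpos e2.symm)
        · rcases lt_or_ge p' a with h1' | h1'
          · by_cases h0' : p' = 0
            · rw [fc4 hc' h0' ha] at hEq
              simp only [List.cons.injEq, Prod.mk.injEq] at hEq
              obtain ⟨⟨e1, -⟩, -⟩ := hEq
              exact False.elim (hc' e1.symm)
            · rw [fc5 hc' (by omega) h1'] at hEq
              simp only [List.cons.injEq, Prod.mk.injEq] at hEq
              obtain ⟨-, ⟨e1, -⟩, -⟩ := hEq
              exact False.elim (hc' e1.symm)
          · rw [fc6 hc' h1'] at hEq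
            simp only [List.cons.injEq, Prod.mk.injEq] at hEq
            obtain ⟨⟨-, e1⟩, e2⟩ := hEq
            have e3 : a - p = 1 := by omega
            rw [e3] at e2
            exact False.elim (ne_insert_other γ c' d (p' - a) hc' e2.symm)
      · rw [fc2 hc h1] at hEq
        by_cases hc' : c' = d
        · rcases lt_trichotomy p' a with h1' | h1' | h1'
          · rw [fc1 hc' h1'] at hEq
            simp only [List.cons.injEq, Prod.mk.injEq] at hEq
            obtain ⟨⟨-, e1⟩, -⟩ := hEq
            exact False.elim (by omega)
          · rw [fc2 hc' h1'] at hEq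
            exact ⟨hc.trans hc'.symm, by omega⟩
          · rw [fc3 hc' h1'] at hEq
            simp only [List.cons.injEq, Prod.mk.injEq] at hEq
            obtain ⟨⟨-, e1⟩, -⟩ := hEq
            exact False.elim (by omega)
        · rcases lt_or_ge p' a with h1' | h1'
          · by_cases h0' : p' = 0
            · rw [fc4 hc' h0' ha] at hEq
              simp only [List.cons.injEq, Prod.mk.injEq] at hEq
              obtain ⟨⟨e1, -⟩, -⟩ := hEq
              exact False.elim (hc' e1.symm)
            · rw [fc5 hc' (by omega) h1'] at hEq
              simp only [List.cons.injEq, Prod.mk.injEq] at hEq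
              obtain ⟨⟨-, e1⟩, -⟩ := hEq
              exact False.elim (by omega)
          · rw [fc6 hc' h1'] at hEq
            simp only [List.cons.injEq, Prod.mk.injEq] at hEq
            obtain ⟨⟨-, e1⟩, -⟩ := hEq
            exact False.elim (by omega)
      · rw [fc3 hc h1] at hEq
        by_cases hc' : c' = d
        · rcases lt_trichotomy p' a with h1' | h1' | h1'
          · rw [fc1 hc' h1'] at hEq
            simp only [List.cons.injEq, Prod.mk.injEq] at hEq
            obtain ⟨⟨-, e1⟩, e2⟩ := hEq
            have e3 : a - p' = 1 := by omega
            rw [e3, hc] at e2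
            exact False.elim (ne_insert_same γ d (p - a) (by omega) (by omega) hγpos e2)
          · rw [fc2 hc' h1'] at hEq
            simp only [List.cons.injEq, Prod.mk.injEq] at hEq
            obtain ⟨⟨-, e1⟩, -⟩ := hEq
            exact False.elim (by omega)
          · rw [fc3 hc' h1'] at hEq
            simp only [List.cons.injEq, Prod.mk.injEq] at hEq
            obtain ⟨-, e2⟩ := hEq
            have h := ih c c' (p - a) (p' - a) hγpos (by omega) (by omega) e2
            exact ⟨hc.trans hc'.symm, by omega⟩
        · rcases lt_or_ge p' a with h1' | h1'
          · by_cases h0' : p' = 0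
            · rw [fc4 hc' h0' ha] at hEq
              simp only [List.cons.injEq, Prod.mk.injEq] at hEq
              obtain ⟨⟨e1, -⟩, -⟩ := hEq
              exact False.elim (hc' e1.symm)
            · rw [fc5 hc' (by omega) h1'] at hEq
              simp only [List.cons.injEq, Prod.mk.injEq] at hEq
              obtain ⟨⟨-, e1⟩, -⟩ := hEq
              exact False.elim (by omega)
          · rw [fc6 hc' h1'] at hEq
            simp only [List.cons.injEq, Prod.mk.injEq] at hEq
            obtain ⟨-, e2⟩ := hEq
            have h := ih c c' (p - a) (p' - a) hγpos (by omega) (by omega) e2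
            exact False.elim (hc' (h.1.symm.trans hc))
    · rcases lt_or_ge p a with h1 | h1
      · by_cases h0 : p = 0
        · rw [fc4 hc h0 ha] at hEq
          by_cases hc' : c' = d
          · rcases lt_trichotomy p' a with h1' | h1' | h1'
            · rw [fc1 hc' h1'] at hEq
              simp only [List.cons.injEq, Prod.mk.injEq] at hEq
              obtain ⟨⟨e1, -⟩, -⟩ := hEq
              exact False.elim (hc e1)
            · rw [fc2 hc' h1'] at hEq
              simp only [List.cons.injEq, Prod.mk.injEq] at hEq
              obtain ⟨⟨e1, -⟩, -⟩ := hEq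
              exact False.elim (hc e1)
            · rw [fc3 hc' h1'] at hEq
              simp only [List.cons.injEq, Prod.mk.injEq] at hEq
              obtain ⟨⟨e1, -⟩, -⟩ := hEq
              exact False.elim (hc e1)
          · rcases lt_or_ge p' a with h1' | h1'
            · by_cases h0' : p' = 0
              · rw [fc4 hc' h0' ha] at hEq
                simp only [List.cons.injEq, Prod.mk.injEq] at hEq
                obtain ⟨⟨e1, -⟩, -⟩ := hEq
                exact ⟨e1, by omega⟩
              · rw [fc5 hc' (by omega) h1'] at hEq
                simp only [List.cons.injEq, Prod.mk.injEq] at hEq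
                obtain ⟨⟨e1, -⟩, -⟩ := hEq
                exact False.elim (hc e1)
            · rw [fc6 hc' h1'] at hEq
              simp only [List.cons.injEq, Prod.mk.injEq] at hEq
              obtain ⟨⟨e1, -⟩, -⟩ := hEq
              exact False.elim (hc e1)
        · rw [fc5 hc (by omega) h1] at hEq
          by_cases hc' : c' = d
          · rcases lt_trichotomy p' a with h1' | h1' | h1'
            · rw [fc1 hc' h1'] at hEq
              simp only [List.cons.injEq, Prod.mk.injEq] at hEq
              obtain ⟨-, ⟨e1, -⟩, -⟩ := hEq
              exact False.elim (hc e1)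
            · rw [fc2 hc' h1'] at hEq
              simp only [List.cons.injEq, Prod.mk.injEq] at hEq
              obtain ⟨⟨-, e1⟩, -⟩ := hEq
              exact False.elim (by omega)
            · rw [fc3 hc' h1'] at hEq
              simp only [List.cons.injEq, Prod.mk.injEq] at hEq
              obtain ⟨⟨-, e1⟩, -⟩ := hEq
              exact False.elim (by omega)
          · rcases lt_or_ge p' a with h1' | h1'
            · by_cases h0' : p' = 0
              · rw [fc4 hc' h0' ha] at hEq
                simp only [List.cons.injEq, Prod.mk.injEq] at hEq
                obtain ⟨⟨e1, -⟩, -⟩ := hEq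
                exact False.elim (hc' e1.symm)
              · rw [fc5 hc' (by omega) h1'] at hEq
                simp only [List.cons.injEq, Prod.mk.injEq] at hEq
                obtain ⟨⟨-, e1⟩, ⟨e2, -⟩, -⟩ := hEq
                exact ⟨e2, e1⟩
            · rw [fc6 hc' h1'] at hEq
              simp only [List.cons.injEq, Prod.mk.injEq] at hEq
              obtain ⟨⟨-, e1⟩, -⟩ := hEq
              exact False.elim (by omega)
      · rw [fc6 hc h1] at hEq
        by_cases hc' : c' = d
        · rcases lt_trichotomy p' a with h1' | h1' | h1'
          · rw [fc1 hc' h1'] at hEq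
            simp only [List.cons.injEq, Prod.mk.injEq] at hEq
            obtain ⟨⟨-, e1⟩, e2⟩ := hEq
            have e3 : a - p' = 1 := by omega
            rw [e3] at e2
            exact False.elim (ne_insert_other γ c d (p - a) hc e2)
          · rw [fc2 hc' h1'] at hEq
            simp only [List.cons.injEq, Prod.mk.injEq] at hEq
            obtain ⟨⟨-, e1⟩, -⟩ := hEq
            exact False.elim (by omega)
          · rw [fc3 hc' h1'] at hEq
            simp only [List.cons.injEq, Prod.mk.injEq] at hEq
            obtain ⟨-, e2⟩ := hEq
            have h := ih c c' (p - a) (p' - a) hγpos (by omega) (by omega) e2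
            exact False.elim (hc (h.1.trans hc'))
        · rcases lt_or_ge p' a with h1' | h1'
          · by_cases h0' : p' = 0
            · rw [fc4 hc' h0' ha] at hEq
              simp only [List.cons.injEq, Prod.mk.injEq] at hEq
              obtain ⟨⟨e1, -⟩, -⟩ := hEq
              exact False.elim (hc' e1.symm)
            · rw [fc5 hc' (by omega) h1'] at hEq
              simp only [List.cons.injEq, Prod.mk.injEq] at hEq
              obtain ⟨⟨-, e1⟩, -⟩ := hEq
              exact False.elim (by omega)
          · rw [fc6 hc' h1'] at hEq
            simp only [List.cons.injEq, Prod.mk.injEq] at hEq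
            obtain ⟨-, e2⟩ := hEq
            have h := ih c c' (p - a) (p' - a) hγpos (by omega) (by omega) e2
            exact ⟨h.1, by omega⟩

lemma cover_cons {γ β : List (Fin m × ℕ)} (x : Fin m × ℕ) (hγ : γ ≠ [])
    (h : CCover m γ β) : CCover m (x :: γ) (x :: β) := by
  rcases h with ⟨h1, -⟩ | ⟨l, r, c, a, h1, h2⟩ | ⟨l, r, c, a, hh, hlt, h1, h2⟩ |
    ⟨l, r, c, c', a, hh, hne, hle, h1, h2⟩
  · exact absurd h1 hγ
  · subst h1; subst h2
    exact Or.inr (Or.inl ⟨x :: l, r, c, a, rfl, rfl⟩)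
  · subst h1; subst h2
    exact Or.inr (Or.inr (Or.inl ⟨x :: l, r, c, a, hh, hlt, rfl, rfl⟩))
  · subst h1; subst h2
    exact Or.inr (Or.inr (Or.inr ⟨x :: l, r, c, c', a, hh, hne, hle, rfl, rfl⟩))

lemma fIns_cover (γ : List (Fin m × ℕ)) : ∀ (c : Fin m) (p : ℕ),
    (∀ x ∈ γ, 0 < x.2) → p ≤ sumL γ → CCover m γ (fIns γ c p) := by
  induction γ with
  | nil => intro c p _ _; exact Or.inl ⟨rfl, c, rfl⟩
  | cons x γ ih =>
    obtain ⟨d, a⟩ := x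
    intro c p hpos hp
    have ha : 0 < a := hpos (d, a) (by simp)
    have hγpos : ∀ x ∈ γ, 0 < x.2 := fun x hx => hpos x (List.mem_cons_of_mem _ hx)
    have hp2 : p ≤ a + sumL γ := by simpa using hp
    by_cases hc : c = d
    · rcases lt_trichotomy p a with h1 | h1 | h1
      · rw [fc1 hc h1]
        exact Or.inr (Or.inr (Or.inl ⟨[], γ, d, a, p, h1, rfl, rfl⟩))
      · rw [fc2 hc h1]
        exact Or.inr (Or.inl ⟨[], γ, d, a, rfl, rfl⟩)
      · rw [fc3 hc h1]
        have hγ : γ ≠ [] := by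
          intro h; subst h; simp at hp2; omega
        exact cover_cons _ hγ (ih c (p - a) hγpos (by omega))
    · rcases lt_or_ge p a with h1 | h1
      · by_cases h0 : p = 0
        · rw [fc4 hc h0 ha]
          refine Or.inr (Or.inr (Or.inr ⟨[], γ, d, c, a, 0, hc, by omega, rfl, ?_⟩))
          have h2 : ¬ (0 = a) := by omega
          simp [h2]
        · rw [fc5 hc (by omega) h1]
          refine Or.inr (Or.inr (Or.inr ⟨[], γ, d, c, a, p, hc, by omega, rfl, ?_⟩))
          have h2 : ¬ (p = a) := by omega
          simp [h0, h2]
      · rw [fc6 hc h1]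
        by_cases hγ : γ = []
        · subst hγ
          have hpa : p = a := by simp at hp2; omega
          rw [fIns_nil]
          refine Or.inr (Or.inr (Or.inr ⟨[], [], d, c, a, a, hc, le_refl a, rfl, ?_⟩))
          have h2 : ¬ (a = 0) := by omega
          simp [h2]
        · exact cover_cons _ hγ (ih c (p - a) hγpos (by omega))

lemma exists_insert (l : List (Fin m × ℕ)) : ∀ (γ : List (Fin m × ℕ)) (c : Fin m),
    γ ≠ [] → (∀ x ∈ l ++ γ, 0 < x.2) →
    ∃ p, p ≤ sumL l + sumL γ ∧ fIns (l ++ γ) c p = l ++ (c, 1) :: γ := by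
  induction l using List.reverseRecOn with
  | nil =>
    intro γ c hγ hpos
    exact ⟨0, by simp, by simpa using fIns_zero γ c (by simpa using hpos)⟩
  | append_singleton l x ihl =>
    obtain ⟨e, b⟩ := x
    intro γ c hγ hpos
    have hb : 0 < b := hpos (e, b) (by simp)
    have e1 : (l ++ [(e, b)]) ++ γ = l ++ ((e, b) :: γ) := by simp
    by_cases hce : c = e
    · rcases Nat.lt_or_ge 1 b with hb2 | hb1
      · refine ⟨sumL l + (b - 1), by simp <;> omega, ?_⟩
        rw [e1, fIns_append l ((e, b) :: γ) c (b - 1) (by omega), fc1 hce (by omega)]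
        have e2 : b - 1 + 1 = b := by omega
        have e3 : b - (b - 1) = 1 := by omega
        rw [e2, e3, hce]
        simp
      · have hb1' : b = 1 := by omega
        subst hb1'
        subst hce
        obtain ⟨p, hpB, hpE⟩ := ihl ((c, 1) :: γ) c (by simp) (by
          intro x hx
          simp only [List.mem_append, List.mem_cons] at hx
          rcases hx with hx | hx | hx
          · exact hpos x (by simp [hx])
          · subst hx; norm_num
          · exact hpos x (by simp [hx]))
        refine ⟨p, by simp at hpB ⊢ <;> omega, ?_⟩
        have e4 : (l ++ [(c, 1)]) ++ γ = l ++ ((c, 1) :: γ) := by simp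
        rw [e4, hpE]
        simp
    · refine ⟨sumL l + b, by simp <;> omega, ?_⟩
      rw [e1, fIns_append0 l e b γ c hce hb, fIns_zero γ c (by
        intro x hx; exact hpos x (by simp [hx]))]
      simp

lemma fIns_surj (α β : List (Fin m × ℕ)) (hpos : ∀ x ∈ α, 0 < x.2) (hne : α ≠ [])
    (h : CCover m α β) : ∃ c p, p ≤ sumL α ∧ fIns α c p = β := by
  rcases h with ⟨h1, -⟩ | ⟨l, r, c, a, h1, h2⟩ | ⟨l, r, c, a, hh, hlt, h1, h2⟩ |
    ⟨l, r, c, c', a, hh, hne', hle, h1, h2⟩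
  · exact absurd h1 hne
  · subst h1; subst h2
    have ha : 0 < a := hpos (c, a) (by simp)
    refine ⟨c, sumL l + a, by simp <;> omega, ?_⟩
    rw [fIns_append l ((c, a) :: r) c a (by omega), fc2 rfl rfl]
  · subst h1; subst h2
    have ha : 0 < a := hpos (c, a) (by simp)
    by_cases h0 : hh = 0
    · subst h0
      obtain ⟨p, hp, hE⟩ := exists_insert l ((c, a) :: r) c (by simp) hpos
      refine ⟨c, p, by simpa using hp, ?_⟩
      rw [hE]
      simp
    · refine ⟨c, sumL l + hh, by simp <;> omega, ?_⟩
      rw [fIns_append l ((c, a) :: r) c hh (by omega), fc1 rfl hlt]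
  · subst h1; subst h2
    have ha : 0 < a := hpos (c, a) (by simp)
    by_cases h0 : hh = 0
    · subst h0
      obtain ⟨p, hp, hE⟩ := exists_insert l ((c, a) :: r) c' (by simp) hpos
      refine ⟨c', p, by simpa using hp, ?_⟩
      rw [hE]
      have h2 : ¬ (0 = a) := by omega
      simp [h2]
    · by_cases hA : hh = a
      · subst hA
        refine ⟨c', sumL l + hh, by simp <;> omega, ?_⟩
        rw [fIns_append l ((c, hh) :: r) c' hh (by omega), fc6 hne' (le_refl hh)]
        have e0 : hh - hh = 0 := by omega
        rw [e0, fIns_zero r c' (fun x hx => hpos x (by simp [hx]))]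
        have h2 : ¬ (hh = 0) := h0
        simp [h2]
      · refine ⟨c', sumL l + hh, by simp <;> omega, ?_⟩
        rw [fIns_append l ((c, a) :: r) c' hh (by omega),
          fc5 hne' (by omega) (by omega)]
        simp [h0, hA]

end CCAux

/-- Every `m`-colored composition `α` of `n ≥ 1` is covered by exactly
`m * (n+1)` colored compositions in `Co^(m)`. -/
theorem card_covers (m n : ℕ) (hm : 1 ≤ m) (hn : 1 ≤ n)
    (α : List (Fin m × ℕ)) (hpos : ∀ p ∈ α, 0 < p.2)
    (hsum : (α.map Prod.snd).sum = n) :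
    Nat.card {β : List (Fin m × ℕ) // CCover m α β} = m * (n + 1) := by
  classical
  have hsum' : CCAux.sumL α = n := hsum
  have hne : α ≠ [] := by
    intro h
    subst h
    simp at hsum
    omega
  let F : Fin m × Fin (n + 1) → {β : List (Fin m × ℕ) // CCover m α β} :=
    fun x => ⟨CCAux.fIns α x.1 x.2,
      CCAux.fIns_cover α x.1 x.2 hpos (by rw [hsum']; exact Nat.lt_succ_iff.mp x.2.isLt)⟩
  have hbij : Function.Bijective F := by
    constructor
    · intro x y hxy
      have hx : (F x).1 = (F y).1 := by rw [hxy]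
      have h2 := CCAux.fIns_inj α x.1 y.1 x.2 y.2 hpos
        (by rw [hsum']; exact Nat.lt_succ_iff.mp x.2.isLt)
        (by rw [hsum']; exact Nat.lt_succ_iff.mp y.2.isLt) hx
      exact Prod.ext h2.1 (Fin.ext h2.2)
    · rintro ⟨β, hβ⟩
      obtain ⟨c, p, hp, hE⟩ := CCAux.fIns_surj α β hpos hne hβ
      rw [hsum'] at hp
      exact ⟨(c, ⟨p, by omega⟩), Subtype.ext hE⟩
  calc Nat.card {β : List (Fin m × ℕ) // CCover m α β}
      = Nat.card (Fin m × Fin (n + 1)) := (Nat.card_eq_of_bijective F hbij).symm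
    _ = m * (n + 1) := by simp
end

section
/- Fix m ≥ 1. For every m-colored permutation u of [n] with colored descent composition C^(m)(u) = α, and for every composition β covering α in Co^(m), there exist unique i ∈ {0,...,n} and j ∈ {0,...,m−1} such that inserting the letter n+1 with color ω^j after position i of u yields a colored permutation u_{(i,j)} of [n+1] with C^(m)(u_{(i,j)}) = β. Moreover, the m(n+1) colored descent compositions C^(m)(u_{(i,j)}) for 0 ≤ i ≤ n, 0 ≤ j ≤ m−1 are pairwise distinct and are precisely the covers of α. -/
/-- The colored descent composition of a colored word (a list of
(color, value) pairs): the list of (color, length) pairs of the maximal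
increasing constant-color runs. -/
def cdc {m : ℕ} : List (Fin m × ℕ) → List (Fin m × ℕ)
  | [] => []
  | (c, v) :: rest =>
    match rest, cdc rest with
    | (c₂, v₂) :: _, (c₃, len) :: t =>
        if c = c₂ ∧ v < v₂ then (c, len + 1) :: t else (c, 1) :: (c₃, len) :: t
    | _, _ => [(c, 1)]

/-- The colored word of an `m`-colored permutation `(w, f)` of `[n]`: the letter
in position `i` is the value `w i` with color `f (w i)`. -/
def cword {m n : ℕ} (w : Equiv.Perm (Fin n)) (f : Fin n → Fin m) :
    List (Fin m × ℕ) :=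
  (List.finRange n).map fun i => (f (w i), (w i : ℕ))

/-!
Inserting a letter `n` that exceeds every other letter, with color `j`, after position `i`
of a colored word affects the runs only locally: the new letter joins the run of the letter
just before it exactly when that letter has color `j`, and it always ends its own run since
the letter after it is smaller. Hence the new colored descent composition is a function `insertComp j i α` of
`α = C(u)` alone. Each such insertion is one of the covering moves, every covering move is
realised by an insertion (walking along the parts of `α`), and the pair `(i, j)` is recovered
from `insertComp j i α` by induction on the parts.
-/

section ColoredCompositions

variable {m : ℕ}

def ContinuesRun (x : Fin m × ℕ) (u : List (Fin m × ℕ)) : Prop :=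
  ∃ y ∈ u.head?, x.1 = y.1 ∧ x.2 < y.2

def bumpHead : List (Fin m × ℕ) → List (Fin m × ℕ)
  | [] => []
  | (c, a) :: t => (c, a + 1) :: t

def compSize (γ : List (Fin m × ℕ)) : ℕ := (γ.map Prod.snd).sum

@[simp]
lemma compSize_nil : compSize ([] : List (Fin m × ℕ)) = 0 := rfl

@[simp]
lemma compSize_cons (p : Fin m × ℕ) (γ : List (Fin m × ℕ)) :
    compSize (p :: γ) = p.2 + compSize γ := by
  simp [compSize]

lemma exists_cdc_cons_eq (c : Fin m) (v : ℕ) (u : List (Fin m × ℕ)) :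
    ∃ a t, cdc ((c, v) :: u) = (c, a) :: t := by
  rcases u with _ | ⟨⟨c₂, v₂⟩, u⟩
  · exact ⟨1, [], rfl⟩
  · obtain ⟨a, t, h⟩ := exists_cdc_cons_eq c₂ v₂ u
    rw [cdc.eq_2 _ _ _ _ _ _ _ _ h]
    split_ifs <;> exact ⟨_, _, rfl⟩

lemma ContinuesRun.exists_eq_cons {c : Fin m} {v : ℕ} {u : List (Fin m × ℕ)}
    (h : ContinuesRun (c, v) u) :
    ∃ v₂ u', u = (c, v₂) :: u' ∧ v < v₂ := by
  obtain ⟨⟨c₂, v₂⟩, hy, hc, hv⟩ := h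
  cases u <;> simp_all

lemma cdc_cons_of_continuesRun {c : Fin m} {v : ℕ} {u : List (Fin m × ℕ)}
    (h : ContinuesRun (c, v) u) : cdc ((c, v) :: u) = bumpHead (cdc u) := by
  obtain ⟨v₂, u, rfl, hv⟩ := h.exists_eq_cons
  obtain ⟨a, t, h⟩ := exists_cdc_cons_eq c v₂ u
  simp [cdc.eq_2 _ _ _ _ _ _ _ _ h, h, hv, bumpHead]

lemma cdc_cons_of_not_continuesRun {c : Fin m} {v : ℕ} {u : List (Fin m × ℕ)}
    (h : ¬ ContinuesRun (c, v) u) : cdc ((c, v) :: u) = (c, 1) :: cdc u := by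
  rcases u with _ | ⟨⟨c₂, v₂⟩, u⟩
  · rfl
  · obtain ⟨a, t, h'⟩ := exists_cdc_cons_eq c₂ v₂ u
    simp_all [cdc.eq_2 _ _ _ _ _ _ _ _ h', ContinuesRun]

lemma ContinuesRun.exists_cdc_eq_cons {c : Fin m} {v : ℕ} {u : List (Fin m × ℕ)}
    (h : ContinuesRun (c, v) u) : ∃ a t, cdc u = (c, a) :: t := by
  obtain ⟨v₂, u, rfl, -⟩ := h.exists_eq_cons
  exact exists_cdc_cons_eq c v₂ u

lemma cdc_pos (u : List (Fin m × ℕ)) : ∀ p ∈ cdc u, 0 < p.2 := by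
  induction u with
  | nil => simp [cdc]
  | cons x u ih =>
    obtain ⟨c, v⟩ := x
    by_cases h : ContinuesRun (c, v) u
    · obtain ⟨a, t, ht⟩ := h.exists_cdc_eq_cons
      rw [cdc_cons_of_continuesRun h, ht]
      rw [ht] at ih
      rintro p (_ | ⟨_, hp⟩)
      · simp
      · exact ih p (List.mem_cons_of_mem _ hp)
    · rw [cdc_cons_of_not_continuesRun h]
      simpa using ih

lemma compSize_cdc (u : List (Fin m × ℕ)) : compSize (cdc u) = u.length := by
  induction u with
  | nil => rfl
  | cons x u ih =>
    obtain ⟨c, v⟩ := x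
    by_cases h : ContinuesRun (c, v) u
    · obtain ⟨a, t, ht⟩ := h.exists_cdc_eq_cons
      rw [cdc_cons_of_continuesRun h, ht, bumpHead]
      rw [ht] at ih
      simp only [compSize_cons, List.length_cons] at ih ⊢
      omega
    · rw [cdc_cons_of_not_continuesRun h]
      simp [ih, Nat.add_comm]

lemma head?_take_append_cons_drop {α : Type*} (u : List α) (y : α) {i : ℕ} (hi : i ≤ u.length) :
    (u.take i ++ y :: u.drop i).head? = if i = 0 then some y else u.head? := by
  rcases u with _ | ⟨x, u⟩
  · simp_all
  · rcases Nat.eq_zero_or_pos i with rfl | h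
    · simp
    · simp [List.head?_append, List.head?_take, h.ne']

def insertPart (j c : Fin m) (h a : ℕ) : List (Fin m × ℕ) :=
  if j = c then (if h < a then [(c, h + 1), (c, a - h)] else [(c, a + 1)])
  else (if h = 0 then [] else [(c, h)]) ++ (j, 1) :: (if h = a then [] else [(c, a - h)])

-- At a run boundary (`i = a`) the letter is placed at the end of the earlier part, which it
-- joins when `j = c`.
def insertComp (j : Fin m) : ℕ → List (Fin m × ℕ) → List (Fin m × ℕ)
  | _, [] => [(j, 1)]
  | i, (c, a) :: r =>
    if i ≤ a then insertPart j c i a ++ r else (c, a) :: insertComp j (i - a) r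

lemma insertComp_zero (j : Fin m) {γ : List (Fin m × ℕ)} (hγ : ∀ p ∈ γ, 0 < p.2) :
    insertComp j 0 γ = (j, 1) :: γ := by
  rcases γ with _ | ⟨⟨c, a⟩, r⟩
  · rfl
  · have ha : 0 < a := hγ (c, a) (by simp)
    by_cases hj : j = c <;> simp [insertComp, insertPart, hj, ha, ha.ne]

lemma insertComp_succ_cons_one (j c : Fin m) (i : ℕ) {γ : List (Fin m × ℕ)}
    (hγ : ∀ p ∈ γ, 0 < p.2) :
    insertComp j (i + 1) ((c, 1) :: γ) =
      if i = 0 ∧ j = c then bumpHead (insertComp j 0 γ) else (c, 1) :: insertComp j i γ := by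
  rw [insertComp_zero j hγ]
  rcases Nat.eq_zero_or_pos i with rfl | hi
  · by_cases hj : j = c <;> simp [insertComp, insertPart, bumpHead, hj, insertComp_zero j hγ]
  · simp [insertComp, hi.ne']

lemma insertComp_succ_cons_succ (j c : Fin m) (i : ℕ) {a : ℕ} (ha : 0 < a)
    (t : List (Fin m × ℕ)) :
    insertComp j (i + 1) ((c, a + 1) :: t) =
      if i = 0 ∧ j ≠ c then (c, 1) :: insertComp j 0 ((c, a) :: t)
      else bumpHead (insertComp j i ((c, a) :: t)) := by
  rcases Nat.eq_zero_or_pos i with rfl | hi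
  · by_cases hj : j = c <;> simp [insertComp, insertPart, bumpHead, hj, ha, ha.ne, ha.ne']
  · by_cases hia : i ≤ a
    · by_cases hj : j = c <;> simp [insertComp, insertPart, bumpHead, hj, hia, hi.ne']
      split_ifs <;> rfl
    · simp [insertComp, bumpHead, hia, hi.ne']

lemma cdc_take_append_cons_drop {n : ℕ} (j : Fin m) {u : List (Fin m × ℕ)}
    (hu : ∀ x ∈ u, x.2 < n) {i : ℕ} (hi : i ≤ u.length) :
    cdc (u.take i ++ (j, n) :: u.drop i) = insertComp j i (cdc u) := by
  induction u generalizing i with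
  | nil => obtain rfl : i = 0 := by simpa using hi
           rfl
  | cons x u ih =>
    obtain ⟨c, v⟩ := x
    have hv : v < n := hu (c, v) (by simp)
    have hu' : ∀ x ∈ u, x.2 < n := fun x hx => hu x (by simp [hx])
    rcases i with _ | i
    · have : ¬ ContinuesRun (j, n) ((c, v) :: u) := by
        rintro ⟨_, ⟨⟩, -, hlt⟩
        exact lt_asymm hv hlt
      simp [cdc_cons_of_not_continuesRun this, insertComp_zero j (cdc_pos _)]
    have hi' : i ≤ u.length := by simpa using hi
    have hcont : ContinuesRun (c, v) (u.take i ++ (j, n) :: u.drop i) ↔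
        if i = 0 then c = j else ContinuesRun (c, v) u := by
      simp only [ContinuesRun, head?_take_append_cons_drop u _ hi']
      split_ifs <;> simp [hv]
    simp only [List.take_succ_cons, List.drop_succ_cons, List.cons_append]
    by_cases hc : ContinuesRun (c, v) u
    · obtain ⟨a, t, ht⟩ := hc.exists_cdc_eq_cons
      have ha : 0 < a := cdc_pos u (c, a) (by simp [ht])
      rw [cdc_cons_of_continuesRun hc, ht, bumpHead, insertComp_succ_cons_succ j c i ha, ← ht]
      by_cases hij : i = 0 ∧ j ≠ c
      · rw [if_pos hij, cdc_cons_of_not_continuesRun (mt hcont.mp (by simp [hij, Ne.symm hij.2])),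
          ih hu' hi', hij.1]
      · rw [if_neg hij, cdc_cons_of_continuesRun (by grind), ih hu' hi']
    · rw [cdc_cons_of_not_continuesRun hc, insertComp_succ_cons_one j c i (cdc_pos u)]
      by_cases hij : i = 0 ∧ j = c
      · rw [if_pos hij, cdc_cons_of_continuesRun (hcont.mpr (by simp [hij])), ih hu' hi', hij.1]
      · rw [if_neg hij, cdc_cons_of_not_continuesRun (by grind), ih hu' hi']

lemma cCover_iff_exists_insertPart {γ β : List (Fin m × ℕ)} :
    CCover m γ β ↔ (γ = [] ∧ ∃ c, β = [(c, 1)]) ∨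
      ∃ l r c a j h, h ≤ a ∧ γ = l ++ (c, a) :: r ∧ β = l ++ insertPart j c h a ++ r := by
  constructor
  · rintro (h | ⟨l, r, c, a, rfl, rfl⟩ | ⟨l, r, c, a, h, hh, rfl, rfl⟩ |
      ⟨l, r, c, c', a, h, hc, hh, rfl, rfl⟩)
    · exact Or.inl h
    · exact Or.inr ⟨l, r, c, a, c, a, le_rfl, rfl, by simp [insertPart]⟩
    · exact Or.inr ⟨l, r, c, a, c, h, hh.le, rfl, by simp [insertPart, hh]⟩
    · exact Or.inr ⟨l, r, c, a, c', h, hh, rfl, by simp [insertPart, hc]⟩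
  · rintro (h | ⟨l, r, c, a, j, h, hh, rfl, rfl⟩)
    · exact Or.inl h
    by_cases hj : j = c
    · subst hj
      rcases hh.lt_or_eq with hh | rfl
      · exact Or.inr (Or.inr (Or.inl ⟨l, r, j, a, h, hh, rfl, by simp [insertPart, hh]⟩))
      · exact Or.inr (Or.inl ⟨l, r, j, h, rfl, by simp [insertPart]⟩)
    · exact Or.inr (Or.inr (Or.inr ⟨l, r, c, j, a, h, hj, hh, rfl, by simp [insertPart, hj]⟩))

lemma exists_insertComp_eq_insertPart (j : Fin m) {γ : List (Fin m × ℕ)} (hγ : γ ≠ [])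
    {i : ℕ} (hi : i ≤ compSize γ) :
    ∃ l r c a h, h ≤ a ∧ γ = l ++ (c, a) :: r ∧
      insertComp j i γ = l ++ insertPart j c h a ++ r := by
  induction γ generalizing i with
  | nil => exact absurd rfl hγ
  | cons p r ih =>
    obtain ⟨c, a⟩ := p
    by_cases hia : i ≤ a
    · exact ⟨[], r, c, a, i, hia, rfl, by simp [insertComp, hia]⟩
    have hr : r ≠ [] := by rintro rfl; simp only [compSize_cons, compSize_nil] at hi; omega
    obtain ⟨l, r', c', a', h, hh, hr', hins⟩ :=
      ih hr (i := i - a) (by simp only [compSize_cons] at hi; omega)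
    exact ⟨(c, a) :: l, r', c', a', h, hh, by simp [hr'], by simp [insertComp, hia, hins]⟩

lemma cCover_insertComp (j : Fin m) (γ : List (Fin m × ℕ)) {i : ℕ} (hi : i ≤ compSize γ) :
    CCover m γ (insertComp j i γ) := by
  rcases eq_or_ne γ [] with rfl | hγ
  · exact Or.inl ⟨rfl, j, rfl⟩
  obtain ⟨l, r, c, a, h, hh, rfl, hins⟩ := exists_insertComp_eq_insertPart j hγ hi
  exact cCover_iff_exists_insertPart.mpr (Or.inr ⟨l, r, c, a, j, h, hh, rfl, hins⟩)

lemma eq_of_insertPart_eq {j j' c : Fin m} {h h' a : ℕ} (hh : h ≤ a) (hh' : h' ≤ a)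
    (heq : insertPart j c h a = insertPart j' c h' a) : h = h' ∧ j = j' := by
  unfold insertPart at heq
  split_ifs at heq <;> simp_all; omega

lemma tail_eq_of_insertPart_append_eq_cons {j c : Fin m} {h a : ℕ} (hh : h ≤ a)
    {r L : List (Fin m × ℕ)} (heq : insertPart j c h a ++ r = (c, a) :: L) :
    L = (j, 1) :: r := by
  unfold insertPart at heq
  split_ifs at heq <;> simp_all
  obtain ⟨rfl, rfl⟩ := heq
  simp

lemma eq_of_insertComp_eq {γ : List (Fin m × ℕ)} (hγ : ∀ p ∈ γ, 0 < p.2) {i i' : ℕ} {j j' : Fin m}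
    (hi : i ≤ compSize γ) (hi' : i' ≤ compSize γ)
    (heq : insertComp j i γ = insertComp j' i' γ) : i = i' ∧ j = j' := by
  induction γ generalizing i i' j j' with
  | nil =>
    obtain ⟨rfl, rfl⟩ : i = 0 ∧ i' = 0 := by simp_all
    simpa [insertComp] using heq
  | cons p r ih =>
    obtain ⟨c, a⟩ := p
    have hr : ∀ p ∈ r, 0 < p.2 := fun p hp => hγ p (by simp [hp])
    simp only [compSize_cons] at hi hi'
    have first_ne_later : ∀ {i i' j j'}, i ≤ a → a < i' → i' ≤ a + compSize r →
        insertComp j i ((c, a) :: r) ≠ insertComp j' i' ((c, a) :: r) := by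
      -- an insertion that keeps the first part `(c, a)` intact is an insertion at `0` in `r`
      intro i i' j j' hi hi' hi'r heq
      simp only [insertComp, if_pos hi, if_neg hi'.not_ge] at heq
      have htail := tail_eq_of_insertPart_append_eq_cons hi heq
      rw [← insertComp_zero j hr] at htail
      have := (ih hr (by omega) (Nat.zero_le _) htail).1
      omega
    by_cases hia : i ≤ a <;> by_cases hia' : i' ≤ a
    · simp only [insertComp, if_pos hia, if_pos hia'] at heq
      exact eq_of_insertPart_eq hia hia' (List.append_cancel_right heq)
    · exact absurd heq (first_ne_later hia (by omega) hi')
    · exact absurd heq.symm (first_ne_later hia' (by omega) hi)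
    · simp only [insertComp, if_neg hia, if_neg hia', List.cons.injEq, true_and] at heq
      have := ih hr (by omega) (by omega) heq
      exact ⟨by omega, this.2⟩

lemma exists_insertComp_cons_eq {c : Fin m} {a : ℕ} (ha : 0 < a) {δ β : List (Fin m × ℕ)}
    (hδ : ∀ p ∈ δ, 0 < p.2) (hβ : ∃ i j, i ≤ compSize δ ∧ insertComp j i δ = β) :
    ∃ i j, i ≤ compSize ((c, a) :: δ) ∧ insertComp j i ((c, a) :: δ) = (c, a) :: β := by
  obtain ⟨i, j, hi, rfl⟩ := hβ
  rcases Nat.eq_zero_or_pos i with rfl | hi0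
  · rw [insertComp_zero j hδ]
    by_cases hj : j = c
    -- `(c, a), (c, 1)` arises by inserting inside `(c, a)` just before its last letter.
    · subst hj
      refine ⟨a - 1, j, by simp only [compSize_cons]; omega, ?_⟩
      simp [insertComp, insertPart, ha, show a - (a - 1) = 1 by omega, show a - 1 + 1 = a by omega]
    · exact ⟨a, j, by simp, by simp [insertComp, insertPart, hj, ha.ne']⟩
  · refine ⟨a + i, j, by simp only [compSize_cons]; omega, ?_⟩
    simp [insertComp, hi0.ne']

lemma exists_insertComp_append_eq (l : List (Fin m × ℕ)) {δ β : List (Fin m × ℕ)}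
    (hlδ : ∀ p ∈ l ++ δ, 0 < p.2) (hβ : ∃ i j, i ≤ compSize δ ∧ insertComp j i δ = β) :
    ∃ i j, i ≤ compSize (l ++ δ) ∧ insertComp j i (l ++ δ) = l ++ β := by
  induction l with
  | nil => simpa using hβ
  | cons p l ih =>
    have hlδ' : ∀ q ∈ l ++ δ, 0 < q.2 := fun q hq => hlδ q (List.mem_cons_of_mem p hq)
    exact exists_insertComp_cons_eq (hlδ p List.mem_cons_self) hlδ' (ih hlδ')

lemma exists_insertComp_eq_of_cCover {γ β : List (Fin m × ℕ)} (hγ : ∀ p ∈ γ, 0 < p.2)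
    (h : CCover m γ β) : ∃ i j, i ≤ compSize γ ∧ insertComp j i γ = β := by
  rcases cCover_iff_exists_insertPart.mp h with ⟨rfl, c, rfl⟩ | ⟨l, r, c, a, j, k, hk, rfl, rfl⟩
  · exact ⟨0, c, le_rfl, rfl⟩
  rw [List.append_assoc]
  refine exists_insertComp_append_eq l hγ ⟨k, j, by simp only [compSize_cons]; omega, ?_⟩
  simp [insertComp, hk]

end ColoredCompositions

theorem covers_from_insertions_general (m n : ℕ)
    (w : Equiv.Perm (Fin n)) (f : Fin n → Fin m) :
    (∀ (i : Fin (n + 1)) (j : Fin m),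
      CCover m (cdc (cword w f))
        (cdc ((cword w f).take (i : ℕ) ++ (j, n) :: (cword w f).drop (i : ℕ)))) ∧
    Function.Injective (fun p : Fin (n + 1) × Fin m =>
      cdc ((cword w f).take (p.1 : ℕ) ++ (p.2, n) :: (cword w f).drop (p.1 : ℕ))) ∧
    (∀ β, CCover m (cdc (cword w f)) β →
      ∃! p : Fin (n + 1) × Fin m,
        cdc ((cword w f).take (p.1 : ℕ) ++ (p.2, n) :: (cword w f).drop (p.1 : ℕ)) = β) := by
  set u := cword w f
  have hlen : u.length = n := by simp [u, cword]
  have hval : ∀ x ∈ u, x.2 < n := by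
    simp only [u, cword, List.mem_map]
    rintro _ ⟨i, -, rfl⟩
    exact (w i).isLt
  have hsize : compSize (cdc u) = n := by rw [compSize_cdc, hlen]
  have hins : ∀ (i : Fin (n + 1)) (j : Fin m),
      cdc (u.take i ++ (j, n) :: u.drop i) = insertComp j i (cdc u) := fun i j =>
    cdc_take_append_cons_drop j hval (by omega)
  have hinj : Function.Injective fun p : Fin (n + 1) × Fin m => insertComp p.2 p.1 (cdc u) :=
    fun p q hpq => by
      obtain ⟨h1, h2⟩ := eq_of_insertComp_eq (cdc_pos u) (by omega) (by omega) hpq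
      exact Prod.ext (Fin.ext h1) h2
  simp only [hins]
  refine ⟨fun i j => cCover_insertComp j (cdc u) (by omega), hinj, fun β hβ => ?_⟩
  obtain ⟨i, j, hi, rfl⟩ := exists_insertComp_eq_of_cCover (cdc_pos u) hβ
  exact ⟨(⟨i, by omega⟩, j), rfl, fun q hq => hinj hq⟩

/-- For an `m`-colored permutation `u = (w, f)` of `[n]` with colored descent
composition `α = C^(m)(u)`: inserting the largest new letter (value `n`) with
color `j` after position `i` always produces a cover of `α`; the resulting
`m(n+1)` colored descent compositions are pairwise distinct; and every cover
`β` of `α` arises from a unique such insertion `(i, j)`. -/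
theorem covers_from_insertions (m n : ℕ) (hm : 1 ≤ m)
    (w : Equiv.Perm (Fin n)) (f : Fin n → Fin m) :
    (∀ (i : Fin (n + 1)) (j : Fin m),
      CCover m (cdc (cword w f))
        (cdc ((cword w f).take (i : ℕ) ++ (j, n) :: (cword w f).drop (i : ℕ)))) ∧
    Function.Injective (fun p : Fin (n + 1) × Fin m =>
      cdc ((cword w f).take (p.1 : ℕ) ++ (p.2, n) :: (cword w f).drop (p.1 : ℕ))) ∧
    (∀ β, CCover m (cdc (cword w f)) β →
      ∃! p : Fin (n + 1) × Fin m,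
        cdc ((cword w f).take (p.1 : ℕ) ++ (p.2, n) :: (cword w f).drop (p.1 : ℕ)) = β) :=
  covers_from_insertions_general m n w f
end

section
/- In the poset Co^(m) of m-colored compositions with m ≥ 2, the Möbius function of a lower interval satisfies: μ(∅, α) = (−1)^|α| if all parts of α have size 1 and no two consecutive parts share the same color, and μ(∅, α) = 0 otherwise (for α ≠ ∅). -/
/-- The partial order of `Co^(m)`: reflexive-transitive closure of the covering
relation. -/
def CLe (m : ℕ) : List (Fin m × ℕ) → List (Fin m × ℕ) → Prop :=
  Relation.ReflTransGen (CCover m)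

/-!
Expand each part `(c, a)` of a colored composition into the letters `c ^ a`. Covers only
insert letters, so `z ≤ β` makes `word z` a subword of `word β`; conversely every alternating
subword `u` of `word β` is the word of a composition `≤ β` with all parts of size 1. Hence the
claimed formula, summed over `[∅, β]`, becomes the sum of `(-1) ^ |u|` over the distinct
alternating subwords `u` of `word β`, which vanishes for `β ≠ ∅`: putting or removing the first
letter of `word β` at the front of `u` is a sign-reversing involution. So the formula satisfies
the recursion defining `μ(∅, ·)`, and the two agree by induction on `|β|`.
-/

namespace List

variable {α : Type*} [DecidableEq α]

def altSublists (v : List α) : Finset (List α) :=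
  v.sublists.toFinset.filter (·.IsChain (· ≠ ·))

@[simp] lemma mem_altSublists {u v : List α} :
    u ∈ altSublists v ↔ u <+ v ∧ u.IsChain (· ≠ ·) := by
  simp [altSublists]

def toggleHead (d : α) : List α → List α
  | [] => [d]
  | e :: t => if e = d then t else d :: e :: t

lemma neg_one_pow_length_toggleHead (d : α) (u : List α) :
    (-1 : ℤ) ^ (toggleHead d u).length = -(-1) ^ u.length := by
  cases u with
  | nil => simp [toggleHead]
  | cons e t => by_cases he : e = d <;> simp [toggleHead, he, pow_succ]

lemma toggleHead_mem_altSublists {d : α} {v u : List α} (hu : u ∈ altSublists (d :: v)) :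
    toggleHead d u ∈ altSublists (d :: v) := by
  rw [mem_altSublists] at hu ⊢
  obtain ⟨hsub, hch⟩ := hu
  cases u with
  | nil => simp [toggleHead]
  | cons e t =>
    by_cases he : e = d
    · simp only [toggleHead, he, if_true]
      exact ⟨(sublist_cons_self e t).trans hsub, hch.tail⟩
    · have hsub' : e :: t <+ v := by simpa [sublist_cons_iff, he] using hsub
      simp only [toggleHead, he, if_false]
      exact ⟨hsub'.cons_cons d, isChain_cons_cons.2 ⟨Ne.symm he, hch⟩⟩

lemma toggleHead_toggleHead (d : α) {u : List α} (hu : u.IsChain (· ≠ ·)) :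
    toggleHead d (toggleHead d u) = u := by
  match u, hu with
  | [], _ => simp [toggleHead]
  | [e], _ => by_cases he : e = d <;> simp [toggleHead, he]
  | e :: f :: t, hu =>
    by_cases he : e = d
    · subst he
      simp [toggleHead, Ne.symm (isChain_cons_cons.1 hu).1]
    · simp [toggleHead, he]

theorem sum_altSublists_neg_one_pow_length {v : List α} (hv : v ≠ []) :
    ∑ u ∈ altSublists v, (-1 : ℤ) ^ u.length = 0 := by
  obtain ⟨d, v, rfl⟩ := exists_cons_of_ne_nil hv
  refine Finset.sum_involution (fun u _ => toggleHead d u) (fun u _ => ?_) (fun u _ hu => ?_)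
    (fun u hu => toggleHead_mem_altSublists hu)
    (fun u hu => toggleHead_toggleHead d (mem_altSublists.1 hu).2)
  · rw [neg_one_pow_length_toggleHead]; ring
  · intro h
    have := neg_one_pow_length_toggleHead d u
    rw [h] at this
    omega

end List

namespace ColoredComposition

variable {m : ℕ}

def word (α : List (Fin m × ℕ)) : List (Fin m) := α.flatMap fun p => List.replicate p.2 p.1

@[simp] lemma word_nil : word ([] : List (Fin m × ℕ)) = [] := rfl

@[simp] lemma word_cons (p : Fin m × ℕ) (α : List (Fin m × ℕ)) :
    word (p :: α) = List.replicate p.2 p.1 ++ word α := rfl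

@[simp] lemma word_append (α β : List (Fin m × ℕ)) : word (α ++ β) = word α ++ word β := by
  simp [word]

lemma word_ne_nil {α : List (Fin m × ℕ)} (hne : α ≠ []) (hpos : ∀ p ∈ α, 0 < p.2) :
    word α ≠ [] := by
  obtain ⟨p, α, rfl⟩ := List.exists_cons_of_ne_nil hne
  have := hpos p (List.mem_cons_self ..)
  simp only [word_cons, ne_eq, List.append_eq_nil_iff, List.replicate_eq_nil_iff, not_and]
  omega

def size (α : List (Fin m × ℕ)) : ℕ := (α.map Prod.snd).sum

@[simp] lemma size_nil : size ([] : List (Fin m × ℕ)) = 0 := rfl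

@[simp] lemma size_cons (p : Fin m × ℕ) (α : List (Fin m × ℕ)) :
    size (p :: α) = p.2 + size α := rfl

@[simp] lemma size_append (α β : List (Fin m × ℕ)) : size (α ++ β) = size α + size β := by
  simp [size]

lemma length_le_size {α : List (Fin m × ℕ)} (hpos : ∀ p ∈ α, 0 < p.2) : α.length ≤ size α := by
  induction α with
  | nil => simp
  | cons p α ih =>
    have := hpos p (List.mem_cons_self ..)
    have := ih fun q hq => hpos q (List.mem_cons_of_mem p hq)
    simp only [List.length_cons, size_cons]
    omega

lemma le_size_of_mem {α : List (Fin m × ℕ)} {p : Fin m × ℕ} (hp : p ∈ α) : p.2 ≤ size α :=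
  List.le_sum_of_mem (List.mem_map_of_mem hp)

def ofWord (u : List (Fin m)) : List (Fin m × ℕ) := u.map (·, 1)

lemma ofWord_injective : Function.Injective (ofWord (m := m)) :=
  List.map_injective_iff.2 fun _ _ h => (Prod.ext_iff.1 h).1

@[simp] lemma ofWord_nil : ofWord ([] : List (Fin m)) = [] := rfl

@[simp] lemma ofWord_cons (c : Fin m) (u : List (Fin m)) :
    ofWord (c :: u) = (c, 1) :: ofWord u := rfl

@[simp] lemma word_ofWord (u : List (Fin m)) : word (ofWord u) = u := by
  induction u <;> simp_all

@[simp] lemma size_ofWord (u : List (Fin m)) : size (ofWord u) = u.length := by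
  induction u <;> simp_all [add_comm]

lemma ofWord_map_fst {α : List (Fin m × ℕ)} (h : ∀ p ∈ α, p.2 = 1) :
    ofWord (α.map Prod.fst) = α := by
  rw [ofWord, List.map_map]
  refine (List.map_congr_left fun p hp => ?_).trans (List.map_id α)
  exact Prod.ext rfl (h p hp).symm

lemma isChain_ofWord_iff {u : List (Fin m)} :
    (ofWord u).IsChain (fun p q => p.1 ≠ q.1) ↔ u.IsChain (· ≠ ·) :=
  List.isChain_map _

end ColoredComposition

open ColoredComposition
open scoped List

namespace CCover

variable {m : ℕ} {α β : List (Fin m × ℕ)}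

lemma size_eq (h : CCover m α β) : size β = size α + 1 := by
  rcases h with ⟨rfl, c, rfl⟩ | ⟨l, r, c, a, rfl, rfl⟩ | ⟨l, r, c, a, h, hlt, rfl, rfl⟩ |
    ⟨l, r, c, c', a, h, hne, hle, rfl, rfl⟩
  · rfl
  · simp; omega
  · simp; omega
  · split_ifs <;> simp <;> omega

lemma word_sublist (h : CCover m α β) : word α <+ word β := by
  rcases h with ⟨rfl, c, rfl⟩ | ⟨l, r, c, a, rfl, rfl⟩ | ⟨l, r, c, a, h, hlt, rfl, rfl⟩ |
    ⟨l, r, c, c', a, h, hne, hle, rfl, rfl⟩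
  · simp
  · simp only [word_append, word_cons]
    exact ((List.replicate_sublist_replicate c).2 a.le_succ |>.append_right _).append_left _
  · have split :
        List.replicate (h + 1) c ++ List.replicate (a - h) c = List.replicate (a + 1) c := by
      rw [← List.replicate_add]; congr 1; omega
    simp only [word_append, word_cons, ← List.append_assoc, split]
    exact (((List.replicate_sublist_replicate c).2 a.le_succ).append_left _).append_right _
  · have part : ∀ k, word (if k = 0 then [] else [(c, k)]) = List.replicate k c := by
      intro k; split <;> simp_all
    have part' : word (if h = a then [] else [(c, a - h)]) = List.replicate (a - h) c := by
      split <;> simp_all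
    have split : List.replicate a c = List.replicate h c ++ List.replicate (a - h) c := by
      rw [← List.replicate_add]; congr 1; omega
    simp only [word_append, word_cons, part, part', split, List.append_assoc]
    exact ((List.sublist_cons_self c' _).append_left _).append_left _

lemma pos (h : CCover m α β) (hα : ∀ p ∈ α, 0 < p.2) : ∀ p ∈ β, 0 < p.2 := by
  rcases h with ⟨rfl, c, rfl⟩ | ⟨l, r, c, a, rfl, rfl⟩ | ⟨l, r, c, a, h, hlt, rfl, rfl⟩ |
    ⟨l, r, c, c', a, h, hne, hle, rfl, rfl⟩
  · simp
  all_goals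
    simp only [List.forall_mem_append, List.forall_mem_cons] at hα ⊢
    obtain ⟨hl, ha, hr⟩ := hα
  · exact ⟨hl, a.succ_pos, hr⟩
  · exact ⟨hl, h.succ_pos, Nat.sub_pos_of_lt hlt, hr⟩
  · refine ⟨⟨hl, ?_, Nat.one_pos, ?_⟩, hr⟩ <;> split_ifs <;> simp <;> omega

lemma insert_unit (l r : List (Fin m × ℕ)) (c : Fin m) (hpos : ∀ p ∈ l ++ r, 0 < p.2) :
    CCover m (l ++ r) (l ++ (c, 1) :: r) := by
  match r with
  | (d, s) :: r =>
    have hs : 0 < s := hpos (d, s) (by simp)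
    by_cases hcd : c = d
    · subst hcd
      exact Or.inr (Or.inr (Or.inl ⟨l, r, c, s, 0, hs, rfl, by simp⟩))
    · refine Or.inr (Or.inr (Or.inr ⟨l, r, d, c, s, 0, hcd, s.zero_le, rfl, ?_⟩))
      simp [hs.ne]
  | [] =>
    rcases List.eq_nil_or_concat l with rfl | ⟨l, ⟨d, t⟩, rfl⟩
    · exact Or.inl ⟨rfl, c, rfl⟩
    · have ht : 0 < t := hpos (d, t) (by simp)
      by_cases hcd : c = d
      · subst hcd
        refine Or.inr (Or.inr (Or.inl ⟨l, [], c, t, t - 1, by omega, by simp, ?_⟩))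
        simp [show t - 1 + 1 = t by omega, show t - (t - 1) = 1 by omega]
      · refine Or.inr (Or.inr (Or.inr ⟨l, [], d, c, t, t, hcd, le_rfl, by simp, ?_⟩))
        simp [ht.ne']

lemma cons {p : Fin m × ℕ} (hp : 0 < p.2) (h : CCover m α β) : CCover m (p :: α) (p :: β) := by
  rcases h with ⟨rfl, c, rfl⟩ | ⟨l, r, c, a, rfl, rfl⟩ | ⟨l, r, c, a, h, hlt, rfl, rfl⟩ |
    ⟨l, r, c, c', a, h, hne, hle, rfl, rfl⟩
  · simpa using insert_unit [p] [] c (by simpa using hp)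
  · exact Or.inr (Or.inl ⟨p :: l, r, c, a, rfl, rfl⟩)
  · exact Or.inr (Or.inr (Or.inl ⟨p :: l, r, c, a, h, hlt, rfl, rfl⟩))
  · exact Or.inr (Or.inr (Or.inr ⟨p :: l, r, c, c', a, h, hne, hle, rfl, rfl⟩))

end CCover

namespace CLe

variable {m : ℕ} {α β : List (Fin m × ℕ)}

lemma eq_or_size_lt (h : CLe m α β) : α = β ∨ size α < size β := by
  induction h with
  | refl => exact Or.inl rfl
  | tail _ hc ih =>
    have := hc.size_eq
    rcases ih with rfl | hlt <;> omega

lemma word_sublist (h : CLe m α β) : word α <+ word β := by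
  induction h with
  | refl => exact List.Sublist.refl _
  | tail _ hc ih => exact ih.trans hc.word_sublist

lemma pos (h : CLe m α β) (hα : ∀ p ∈ α, 0 < p.2) : ∀ p ∈ β, 0 < p.2 := by
  induction h with
  | refl => exact hα
  | tail _ hc ih => exact hc.pos ih

lemma cons {p : Fin m × ℕ} (hp : 0 < p.2) (h : CLe m α β) : CLe m (p :: α) (p :: β) := by
  induction h with
  | refl => exact .refl
  | tail _ hc ih => exact ih.tail (hc.cons hp)

lemma cons_of_le {c : Fin m} {s t : ℕ} (h : s ≤ t) (α : List (Fin m × ℕ)) :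
    CLe m ((c, s) :: α) ((c, t) :: α) := by
  induction t, h using Nat.le_induction with
  | base => exact .refl
  | succ n _ ih => exact ih.tail (Or.inr (Or.inl ⟨[], α, c, n, rfl, rfl⟩))

end CLe

namespace ColoredComposition

variable {m : ℕ}

theorem cle_ofWord_of_sublist {α : List (Fin m × ℕ)} (hpos : ∀ p ∈ α, 0 < p.2)
    {u : List (Fin m)} (hu : u.IsChain (· ≠ ·)) (hsub : u <+ word α) : CLe m (ofWord u) α := by
  induction α generalizing u with
  | nil =>
    obtain rfl := List.sublist_nil.1 hsub
    exact .refl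
  | cons p α ih =>
    obtain ⟨c, a⟩ := p
    simp only [List.forall_mem_cons] at hpos
    obtain ⟨ha, hpos⟩ := hpos
    obtain ⟨u₁, u₂, rfl, h₁, h₂⟩ := List.sublist_append_iff.1 hsub
    obtain ⟨b, -, rfl⟩ := List.sublist_replicate_iff.1 h₁
    have ih₂ := ih hpos (List.isChain_append.1 hu).2.1 h₂
    suffices CLe m (ofWord (List.replicate b c ++ u₂)) ((c, 1) :: α) from
      this.trans (CLe.cons_of_le ha α)
    -- an alternating word takes at most one letter from the run `c ^ a`
    match b, hu with
    | 0, _ => exact ih₂.tail (by simpa using CCover.insert_unit [] α c (by simpa using hpos))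
    | 1, _ => exact ih₂.cons Nat.one_pos
    | b + 2, hu => simp [List.replicate_succ] at hu

lemma cle_nil_of_pos {α : List (Fin m × ℕ)} (hpos : ∀ p ∈ α, 0 < p.2) : CLe m [] α :=
  cle_ofWord_of_sublist (u := []) hpos List.isChain_nil (List.nil_sublist _)

lemma lowerInterval_finite (β : List (Fin m × ℕ)) :
    {z | CLe m [] z ∧ CLe m z β}.Finite := by
  set n := size β
  refine ((List.finite_length_le (Fin m × Fin (n + 1)) n).image
    (List.map fun q => (q.1, (q.2 : ℕ)))).subset ?_
  rintro z ⟨h0, hβ⟩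
  have hpos := h0.pos (by simp)
  have hsize : size z ≤ n := by rcases hβ.eq_or_size_lt with rfl | h <;> omega
  refine ⟨z.map fun p => (p.1, Fin.ofNat (n + 1) p.2), ?_, ?_⟩
  · simpa using (length_le_size hpos).trans hsize
  · rw [List.map_map]
    refine (List.map_congr_left fun p hp => ?_).trans (List.map_id z)
    have := le_size_of_mem hp
    simp [Nat.mod_eq_of_lt (show p.2 < n + 1 by omega)]

end ColoredComposition

namespace ColoredComposition

variable {m : ℕ}

noncomputable def lowerInterval (β : List (Fin m × ℕ)) : Finset (List (Fin m × ℕ)) :=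
  (lowerInterval_finite β).toFinset

@[simp] lemma mem_lowerInterval {β z : List (Fin m × ℕ)} :
    z ∈ lowerInterval β ↔ CLe m [] z ∧ CLe m z β :=
  Set.Finite.mem_toFinset _

lemma finsum_eq_sum_lowerInterval (f : List (Fin m × ℕ) → ℤ) (β : List (Fin m × ℕ)) :
    ∑ᶠ z ∈ {z | CLe m [] z ∧ CLe m z β}, f z = ∑ z ∈ lowerInterval β, f z :=
  finsum_mem_eq_finite_toFinset_sum f _

theorem eq_of_sum_lowerInterval_eq_zero {f g : List (Fin m × ℕ) → ℤ} (h₀ : f [] = g [])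
    (hf : ∀ β, CLe m [] β → β ≠ [] → ∑ z ∈ lowerInterval β, f z = 0)
    (hg : ∀ β, CLe m [] β → β ≠ [] → ∑ z ∈ lowerInterval β, g z = 0)
    {β : List (Fin m × ℕ)} (hβ : CLe m [] β) : f β = g β := by
  induction hn : size β using Nat.strong_induction_on generalizing β with
  | _ n ih =>
    rcases eq_or_ne β [] with rfl | hne
    · exact h₀
    have hββ : β ∈ lowerInterval β := mem_lowerInterval.2 ⟨hβ, .refl⟩
    have below : ∀ z ∈ (lowerInterval β).erase β, f z = g z := by
      intro z hz
      obtain ⟨hzβ, hz⟩ := Finset.mem_erase.1 hz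
      obtain ⟨h0z, hzβ'⟩ := mem_lowerInterval.1 hz
      exact ih _ (hn ▸ hzβ'.eq_or_size_lt.resolve_left hzβ) h0z rfl
    have hf' := Finset.add_sum_erase _ f hββ ▸ hf β hβ hne
    have hg' := Finset.add_sum_erase _ g hββ ▸ hg β hβ hne
    rw [Finset.sum_congr rfl below] at hf'
    linarith

def mobiusFormula (α : List (Fin m × ℕ)) : ℤ :=
  if (∀ p ∈ α, p.2 = 1) ∧ α.IsChain (fun p q => p.1 ≠ q.1) then (-1) ^ size α else 0

lemma filter_lowerInterval_eq_image {β : List (Fin m × ℕ)} (hpos : ∀ p ∈ β, 0 < p.2) :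
    (lowerInterval β).filter (fun z => (∀ p ∈ z, p.2 = 1) ∧ z.IsChain (fun p q => p.1 ≠ q.1))
      = (List.altSublists (word β)).image ofWord := by
  ext z
  simp only [Finset.mem_filter, mem_lowerInterval, Finset.mem_image, List.mem_altSublists]
  constructor
  · rintro ⟨⟨-, hzβ⟩, hunit, hch⟩
    refine ⟨z.map Prod.fst, ⟨?_, ?_⟩, ofWord_map_fst hunit⟩
    · have := hzβ.word_sublist
      rwa [← ofWord_map_fst hunit, word_ofWord] at this
    · simpa [← isChain_ofWord_iff, ofWord_map_fst hunit] using hch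
  · rintro ⟨u, ⟨hsub, hch⟩, rfl⟩
    refine ⟨⟨?_, cle_ofWord_of_sublist hpos hch hsub⟩, by simp [ofWord], isChain_ofWord_iff.2 hch⟩
    exact cle_nil_of_pos (by simp [ofWord])

lemma sum_lowerInterval_mobiusFormula {β : List (Fin m × ℕ)} (hβ : CLe m [] β) (hne : β ≠ []) :
    ∑ z ∈ lowerInterval β, mobiusFormula z = 0 := by
  have hpos := hβ.pos (by simp)
  calc ∑ z ∈ lowerInterval β, mobiusFormula z
      = ∑ z ∈ (lowerInterval β).filter
          (fun z => (∀ p ∈ z, p.2 = 1) ∧ z.IsChain (fun p q => p.1 ≠ q.1)), (-1) ^ size z :=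
        (Finset.sum_filter _ _).symm
    _ = ∑ u ∈ List.altSublists (word β), (-1) ^ u.length := by
        rw [filter_lowerInterval_eq_image hpos, Finset.sum_image ofWord_injective.injOn]
        simp
    _ = 0 := List.sum_altSublists_neg_one_pow_length (word_ne_nil hne hpos)

end ColoredComposition

theorem mobius_lower_interval_general (m : ℕ)
    (μ : List (Fin m × ℕ) → List (Fin m × ℕ) → ℤ)
    (hrefl : ∀ x, μ x x = 1)
    (hrec : ∀ x y, CLe m x y → x ≠ y →
      (∑ᶠ z ∈ {z | CLe m x z ∧ CLe m z y}, μ x z) = 0)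
    (α : List (Fin m × ℕ)) (hpos : ∀ p ∈ α, 0 < p.2) :
    μ [] α = if (∀ p ∈ α, p.2 = 1) ∧ α.IsChain (fun p q => p.1 ≠ q.1)
      then (-1) ^ (α.map Prod.snd).sum else 0 := by
  refine eq_of_sum_lowerInterval_eq_zero (g := mobiusFormula) ?_ (fun β hβ hne => ?_)
    (fun β hβ hne => sum_lowerInterval_mobiusFormula hβ hne) (cle_nil_of_pos hpos)
  · simp [hrefl, mobiusFormula]
  · rw [← finsum_eq_sum_lowerInterval]
    exact hrec [] β hβ hne.symm

/-- Möbius function of lower intervals in `Co^(m)` for `m ≥ 2`: if `μ` satisfies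
the defining recursion of the Möbius function of the poset `Co^(m)`, then for a
nonempty `m`-colored composition `α`, `μ(∅, α) = (-1)^|α|` when all parts of `α`
have size 1 and no two consecutive parts share a color, and `μ(∅, α) = 0`
otherwise. -/
theorem mobius_lower_interval (m : ℕ) (hm : 2 ≤ m)
    (μ : List (Fin m × ℕ) → List (Fin m × ℕ) → ℤ)
    (hrefl : ∀ x, μ x x = 1)
    (hrec : ∀ x y, CLe m x y → x ≠ y →
      (∑ᶠ z ∈ {z | CLe m x z ∧ CLe m z y}, μ x z) = 0)
    (α : List (Fin m × ℕ)) (hne : α ≠ []) (hpos : ∀ p ∈ α, 0 < p.2) :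
    μ [] α = if (∀ p ∈ α, p.2 = 1) ∧ α.IsChain (fun p q => p.1 ≠ q.1)
      then (-1) ^ (α.map Prod.snd).sum else 0 :=
  mobius_lower_interval_general m μ hrefl hrec α hpos
end

section
/- For each covering relation α ≻ β in the colored composition poset Co^(m), the urn move realizing it is unique: there is exactly one pair (i, t) with t ∈ {1,2,3} such that applying a move of type t at urn U_i to the ball-distribution of α yields the ball-distribution of β. Formally: given colored compositions α ≻ β, the index j and the type of the covering relation (grow a part by 1; split a part into two same-color parts; or delete a size-1 part of different color and merge/split accordingly) are uniquely determined. -/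
section Helpers
variable {X : Type*}

lemma gL (l r : List X) {k : ℕ} (h : k < l.length) : (l ++ r)[k]? = l[k]? := by
  rw [List.getElem?_append, if_pos h]

lemma gMid (l r : List X) (x : X) : (l ++ x :: r)[l.length]? = some x := by
  rw [List.getElem?_append_right le_rfl]; simp

lemma gGt (l r : List X) (x : X) {k : ℕ} (h : l.length < k) :
    (l ++ x :: r)[k]? = r[k - l.length - 1]? := by
  rw [List.getElem?_append_right h.le,
    show k - l.length = (k - l.length - 1) + 1 by omega, List.getElem?_cons_succ]
  congr 1

lemma chain (f : ℕ → Option X) {i j : ℕ} (h : ∀ k, i ≤ k → k < j → f k = f (k+1)) :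
    ∀ k, i ≤ k → k ≤ j → f k = f i := by
  intro k hk
  induction k, hk using Nat.le_induction with
  | base => intro _; rfl
  | succ n hn ih =>
    intro hnj
    rw [← h n hn (by omega)]
    exact ih (by omega)

end Helpers

section Moves
variable {m : ℕ} {α β l₁ r₁ l₂ r₂ : List (Fin m × ℕ)}

lemma aux0a0a {c₁ c₂ : Fin m} {a₁ a₂ : ℕ}
    (ha₁ : 2 ≤ a₁) (hα₁ : α = l₁ ++ (c₁,a₁)::r₁) (hβ₁ : β = l₁ ++ (c₁,a₁-1)::r₁)
    (hα₂ : α = l₂ ++ (c₂,a₂)::r₂) (hβ₂ : β = l₂ ++ (c₂,a₂-1)::r₂) :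
    l₁.length = l₂.length := by
  by_contra hne
  have h1 : β[l₁.length]? = some (c₁, a₁-1) := by rw [hβ₁]; exact gMid _ _ _
  have h2 : α[l₁.length]? = some (c₁, a₁) := by rw [hα₁]; exact gMid _ _ _
  have h3 : β[l₁.length]? = α[l₁.length]? := by
    rw [hβ₂, hα₂]
    rcases lt_or_gt_of_ne hne with h | h
    · rw [gL _ _ h, gL _ _ h]
    · rw [gGt _ _ _ h, gGt _ _ _ h]
  rw [h1, h2] at h3; simp at h3; omega

lemma aux0b0b {c₁ c₂ : Fin m}
    (hα₁ : α = l₁ ++ (c₁,1)::r₁) (hβ₁ : β = l₁ ++ r₁)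
    (hne₂ : ∀ p ∈ l₂.getLast?, p.1 ≠ c₂)
    (hα₂ : α = l₂ ++ (c₂,1)::r₂) (hβ₂ : β = l₂ ++ r₂)
    (hij : l₁.length < l₂.length) : False := by
  have hchain : ∀ k, l₁.length ≤ k → k < l₂.length → α[k]? = α[k+1]? := by
    intro k hik hkj
    have e1 : β[k]? = α[k]? := by rw [hβ₂, hα₂, gL _ _ hkj, gL _ _ hkj]
    have e2 : β[k]? = α[k+1]? := by
      rw [hβ₁, hα₁, List.getElem?_append_right hik, gGt _ _ _ (by omega)]
      congr 1; omega
    rw [← e1, e2]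
  have hch := chain (fun k => α[k]?) hchain
  have hi : α[l₁.length]? = some (c₁,1) := by rw [hα₁]; exact gMid _ _ _
  have hj : α[l₂.length]? = some (c₁,1) := (hch _ (by omega) le_rfl).trans hi
  have hj1 : α[l₂.length-1]? = some (c₁,1) := (hch _ (by omega) (by omega)).trans hi
  have hjc : c₂ = c₁ := by
    rw [hα₂, gMid] at hj
    simp only [Option.some.injEq, Prod.mk.injEq] at hj
    exact hj.1
  have hl2 : l₂.getLast? = some (c₁,1) := by
    rw [hα₂, gL _ _ (by omega)] at hj1
    rw [List.getLast?_eq_getElem?]; exact hj1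
  exact hne₂ (c₁,1) (Option.mem_def.mpr hl2) hjc.symm

lemma aux11 {c₁ c'₁ c₂ c'₂ : Fin m} {a₁ b₁ a₂ b₂ : ℕ}
    (hα : ∀ p ∈ α, 0 < p.2)
    (hα₁ : α = l₁ ++ (c'₁,a₁)::(c₁,1)::(c'₁,b₁)::r₁) (hβ₁ : β = l₁ ++ (c'₁,a₁+b₁)::r₁)
    (hα₂ : α = l₂ ++ (c'₂,a₂)::(c₂,1)::(c'₂,b₂)::r₂) (hβ₂ : β = l₂ ++ (c'₂,a₂+b₂)::r₂)
    (hij : l₁.length < l₂.length) : False := by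
  have hb : 0 < b₁ := hα (c'₁,b₁) (by rw [hα₁]; simp)
  have h1 : β[l₁.length]? = some (c'₁, a₁+b₁) := by rw [hβ₁]; exact gMid _ _ _
  have h2 : α[l₁.length]? = some (c'₁, a₁) := by rw [hα₁]; exact gMid _ _ _
  have h3 : β[l₁.length]? = α[l₁.length]? := by rw [hβ₂, hα₂, gL _ _ hij, gL _ _ hij]
  rw [h1, h2] at h3; simp at h3; omega

lemma aux22 {c₁ c₂ : Fin m} {a₁ b₁ a₂ b₂ : ℕ}
    (hα₁ : α = l₁ ++ (c₁,a₁)::(c₁,b₁)::r₁) (hβ₁ : β = l₁ ++ (c₁,a₁+b₁-1)::r₁)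
    (ha₂ : 2 ≤ a₂) (hα₂ : α = l₂ ++ (c₂,a₂)::(c₂,b₂)::r₂) (hβ₂ : β = l₂ ++ (c₂,a₂+b₂-1)::r₂)
    (hij : l₁.length < l₂.length) : False := by
  have h1 : β[l₂.length]? = α[l₂.length+1]? := by
    rw [hβ₁, hα₁, gGt _ _ _ hij,
      show l₁ ++ (c₁,a₁)::(c₁,b₁)::r₁ = (l₁ ++ [(c₁,a₁)]) ++ (c₁,b₁)::r₁ by simp,
      gGt _ _ _ (by simp; omega)]
    congr 1
    simp only [List.length_append, List.length_cons, List.length_nil]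
    omega
  have h2 : β[l₂.length]? = some (c₂, a₂+b₂-1) := by rw [hβ₂]; exact gMid _ _ _
  have h3 : α[l₂.length+1]? = some (c₂, b₂) := by
    rw [hα₂, show l₂ ++ (c₂,a₂)::(c₂,b₂)::r₂ = (l₂ ++ [(c₂,a₂)]) ++ (c₂,b₂)::r₂ by simp,
      show l₂.length + 1 = (l₂ ++ [(c₂,a₂)]).length by simp]
    exact gMid _ _ _
  rw [h2, h3] at h1; simp at h1; omega

lemma aux0b2A {c₁ c₂ : Fin m} {a₂ b₂ : ℕ}
    (hα₁ : α = l₁ ++ (c₁,1)::r₁) (hβ₁ : β = l₁ ++ r₁)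
    (ha₂ : 2 ≤ a₂) (hα₂ : α = l₂ ++ (c₂,a₂)::(c₂,b₂)::r₂) (hβ₂ : β = l₂ ++ (c₂,a₂+b₂-1)::r₂)
    (hij : l₁.length ≤ l₂.length) : False := by
  have h1 : β[l₂.length]? = α[l₂.length+1]? := by
    rw [hβ₁, hα₁, List.getElem?_append_right hij,
      show l₁ ++ (c₁,1)::r₁ = (l₁ ++ [(c₁,1)]) ++ r₁ by simp,
      List.getElem?_append_right (by simp; omega)]
    congr 1
    simp only [List.length_append, List.length_cons, List.length_nil]
    omega
  have h2 : β[l₂.length]? = some (c₂, a₂+b₂-1) := by rw [hβ₂]; exact gMid _ _ _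
  have h3 : α[l₂.length+1]? = some (c₂, b₂) := by
    rw [hα₂, show l₂ ++ (c₂,a₂)::(c₂,b₂)::r₂ = (l₂ ++ [(c₂,a₂)]) ++ (c₂,b₂)::r₂ by simp,
      show l₂.length + 1 = (l₂ ++ [(c₂,a₂)]).length by simp]
    exact gMid _ _ _
  rw [h2, h3] at h1; simp at h1; omega

lemma aux0b2B {c₁ c₂ : Fin m} {a₂ b₂ : ℕ}
    (hα : ∀ p ∈ α, 0 < p.2)
    (hne₁ : ∀ p ∈ l₁.getLast?, p.1 ≠ c₁) (hα₁ : α = l₁ ++ (c₁,1)::r₁) (hβ₁ : β = l₁ ++ r₁)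
    (ha₂ : 2 ≤ a₂) (hα₂ : α = l₂ ++ (c₂,a₂)::(c₂,b₂)::r₂) (hβ₂ : β = l₂ ++ (c₂,a₂+b₂-1)::r₂)
    (hji : l₂.length < l₁.length) : False := by
  have hb : 0 < b₂ := hα (c₂,b₂) (by rw [hα₂]; simp)
  have e1 : β[l₂.length]? = α[l₂.length]? := by
    rw [hβ₁, hα₁, gL _ _ hji, gL _ _ hji]
  have e2 : β[l₂.length]? = some (c₂, a₂+b₂-1) := by rw [hβ₂]; exact gMid _ _ _
  have e3 : α[l₂.length]? = some (c₂, a₂) := by rw [hα₂]; exact gMid _ _ _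
  have hb1 : b₂ = 1 := by rw [e2, e3] at e1; simp at e1; omega
  subst hb1
  have hchain : ∀ k, l₂.length + 1 ≤ k → k < l₁.length → α[k]? = α[k+1]? := by
    intro k h1k h2k
    have f1 : β[k]? = α[k]? := by rw [hβ₁, hα₁, gL _ _ h2k, gL _ _ h2k]
    have f2 : β[k]? = α[k+1]? := by
      rw [hβ₂, hα₂, gGt _ _ _ (by omega),
        show l₂ ++ (c₂,a₂)::(c₂,1)::r₂ = (l₂ ++ [(c₂,a₂)]) ++ (c₂,1)::r₂ by simp,
        gGt _ _ _ (by simp; omega)]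
      congr 1
      simp only [List.length_append, List.length_cons, List.length_nil]
      omega
    rw [← f1, f2]
  have hch := chain (fun k => α[k]?) hchain
  have hstart : α[l₂.length+1]? = some (c₂,1) := by
    rw [hα₂, show l₂ ++ (c₂,a₂)::(c₂,1)::r₂ = (l₂ ++ [(c₂,a₂)]) ++ (c₂,1)::r₂ by simp,
      show l₂.length + 1 = (l₂ ++ [(c₂,a₂)]).length by simp]
    exact gMid _ _ _
  have hi : α[l₁.length]? = some (c₁,1) := by rw [hα₁]; exact gMid _ _ _
  have hci : c₁ = c₂ := by
    have h : α[l₁.length]? = some (c₂,1) := (hch l₁.length (by omega) le_rfl).trans hstart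
    rw [hi] at h
    simp only [Option.some.injEq, Prod.mk.injEq] at h
    exact h.1
  have hprev : ∃ d, α[l₁.length - 1]? = some d ∧ d.1 = c₂ := by
    rcases eq_or_lt_of_le (Nat.succ_le_of_lt hji) with h | h
    · exact ⟨(c₂,a₂), by rw [show l₁.length - 1 = l₂.length by omega]; exact ⟨e3, rfl⟩⟩
    · exact ⟨(c₂,1), (hch (l₁.length - 1) (by omega) (by omega)).trans hstart, rfl⟩
  obtain ⟨d, hd, hdc⟩ := hprev
  have hl : l₁.getLast? = some d := by
    rw [hα₁, gL _ _ (by omega)] at hd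
    rw [List.getLast?_eq_getElem?]; exact hd
  exact hne₁ d (Option.mem_def.mpr hl) (hdc.trans hci.symm)

end Moves

/-- `DownMoveAt m i t α β`: the downward urn move of type `t` at urn (part
index) `i` takes the colored composition `α` to `β`.  Type `0`: remove a ball
from urn `i`, i.e. decrease a part of size `≥ 2` by one, or delete a part of
size `1` which is first or whose left neighbor has a different color.  Type
`1`: delete a size-1 part whose two neighbors have equal color different from
its own, merging the neighbors.  Type `2`: merge two adjacent parts of the same
color (the left one of size `≥ 2`) and remove one ball from the result. -/
def DownMoveAt (m : ℕ) (i : ℕ) (t : Fin 3) (α β : List (Fin m × ℕ)) : Prop :=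
  if t = 0 then
    (∃ (l r : List (Fin m × ℕ)) (c : Fin m) (a : ℕ), l.length = i ∧ 2 ≤ a ∧
        α = l ++ (c, a) :: r ∧ β = l ++ (c, a - 1) :: r) ∨
    (∃ (l r : List (Fin m × ℕ)) (c : Fin m), l.length = i ∧
        (∀ p ∈ l.getLast?, p.1 ≠ c) ∧ α = l ++ (c, 1) :: r ∧ β = l ++ r)
  else if t = 1 then
    ∃ (l r : List (Fin m × ℕ)) (c c' : Fin m) (a b : ℕ), l.length + 1 = i ∧
      c ≠ c' ∧ α = l ++ (c', a) :: (c, 1) :: (c', b) :: r ∧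
      β = l ++ (c', a + b) :: r
  else
    ∃ (l r : List (Fin m × ℕ)) (c : Fin m) (a b : ℕ), l.length = i ∧ 2 ≤ a ∧
      α = l ++ (c, a) :: (c, b) :: r ∧ β = l ++ (c, a + b - 1) :: r

/-- For each covering relation `α ≻ β` in `Co^(m)`, the urn move realizing it
is unique: there is exactly one pair `(i, t)` such that the move of type `t` at
urn `i` transforms `α` into `β`. -/
theorem downmove_unique (m : ℕ) (α β : List (Fin m × ℕ))
    (hα : ∀ p ∈ α, 0 < p.2)
    (h : ∃ (i : ℕ) (t : Fin 3), DownMoveAt m i t α β) :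
    ∃! p : ℕ × Fin 3, DownMoveAt m p.1 p.2 α β := by

  obtain ⟨i, t, hm⟩ := h
  refine ⟨(i, t), hm, ?_⟩
  rintro ⟨j, s⟩ hm'
  simp only [DownMoveAt] at hm hm'
  fin_cases t <;> fin_cases s <;>
    simp only [Fin.isValue, Fin.mk_one, Fin.zero_eta, if_true, if_false,
      Fin.reduceEq, ite_true, ite_false, reduceIte] at hm hm'
  · -- 0 0
    simp only [Prod.mk.injEq]
    refine ⟨?_, trivial⟩
    rcases hm with ⟨l,r,c,a,hl,ha,hA,hB⟩|⟨l,r,c,hl,hc,hA,hB⟩ <;>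
      rcases hm' with ⟨l',r',c',a',hl',ha',hA',hB'⟩|⟨l',r',c',hl',hc',hA',hB'⟩
    · subst hl; subst hl'; exact aux0a0a ha' hA' hB' hA hB
    · have e1 := congrArg List.length (hA.symm.trans hA')
      have e2 := congrArg List.length (hB.symm.trans hB')
      simp at e1 e2; omega
    · have e1 := congrArg List.length (hA.symm.trans hA')
      have e2 := congrArg List.length (hB.symm.trans hB')
      simp at e1 e2; omega
    · subst hl; subst hl'
      rcases lt_trichotomy l'.length l.length with hlt | heq | hgt
      · exact (aux0b0b hA' hB' hc hA hB hlt).elim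
      · exact heq
      · exact (aux0b0b hA hB hc' hA' hB' hgt).elim
  · -- 0 1
    exfalso
    obtain ⟨l',r',c',c'',a',b',hl',hcc,hA',hB'⟩ := hm'
    rcases hm with ⟨l,r,c,a,hl,ha,hA,hB⟩|⟨l,r,c,hl,hc,hA,hB⟩ <;>
    · have e1 := congrArg List.length (hA.symm.trans hA')
      have e2 := congrArg List.length (hB.symm.trans hB')
      simp at e1 e2; omega
  · -- 0 2
    exfalso
    obtain ⟨l',r',c',a',b',hl',ha',hA',hB'⟩ := hm'
    rcases hm with ⟨l,r,c,a,hl,ha,hA,hB⟩|⟨l,r,c,hl,hc,hA,hB⟩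
    · have e1 := congrArg List.length (hA.symm.trans hA')
      have e2 := congrArg List.length (hB.symm.trans hB')
      simp at e1 e2; omega
    · rcases le_or_gt l.length l'.length with hle | hlt
      · exact aux0b2A hA hB ha' hA' hB' hle
      · exact aux0b2B hα hc hA hB ha' hA' hB' hlt
  · -- 1 0
    exfalso
    obtain ⟨l,r,c,c'',a,b,hl,hcc,hA,hB⟩ := hm
    rcases hm' with ⟨l',r',c',a',hl',ha',hA',hB'⟩|⟨l',r',c',hl',hc',hA',hB'⟩ <;>
    · have e1 := congrArg List.length (hA.symm.trans hA')
      have e2 := congrArg List.length (hB.symm.trans hB')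
      simp at e1 e2; omega
  · -- 1 1
    simp only [Prod.mk.injEq]
    refine ⟨?_, trivial⟩
    obtain ⟨l,r,c,c₂,a,b,hl,hcc,hA,hB⟩ := hm
    obtain ⟨l',r',c',c₂',a',b',hl',hcc',hA',hB'⟩ := hm'
    subst hl; subst hl'
    rcases lt_trichotomy l'.length l.length with hlt | heq | hgt
    · exact (aux11 hα hA' hB' hA hB hlt).elim
    · omega
    · exact (aux11 hα hA hB hA' hB' hgt).elim
  · -- 1 2
    exfalso
    obtain ⟨l,r,c,c₂,a,b,hl,hcc,hA,hB⟩ := hm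
    obtain ⟨l',r',c',a',b',hl',ha',hA',hB'⟩ := hm'
    have e1 := congrArg List.length (hA.symm.trans hA')
    have e2 := congrArg List.length (hB.symm.trans hB')
    simp at e1 e2; omega
  · -- 2 0
    exfalso
    obtain ⟨l,r,c,a,b,hl,ha,hA,hB⟩ := hm
    rcases hm' with ⟨l',r',c',a',hl',ha',hA',hB'⟩|⟨l',r',c',hl',hc',hA',hB'⟩
    · have e1 := congrArg List.length (hA.symm.trans hA')
      have e2 := congrArg List.length (hB.symm.trans hB')
      simp at e1 e2; omega
    · rcases le_or_gt l'.length l.length with hle | hlt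
      · exact aux0b2A hA' hB' ha hA hB hle
      · exact aux0b2B hα hc' hA' hB' ha hA hB hlt
  · -- 2 1
    exfalso
    obtain ⟨l,r,c,a,b,hl,ha,hA,hB⟩ := hm
    obtain ⟨l',r',c',c₂',a',b',hl',hcc',hA',hB'⟩ := hm'
    have e1 := congrArg List.length (hA.symm.trans hA')
    have e2 := congrArg List.length (hB.symm.trans hB')
    simp at e1 e2; omega
  · -- 2 2
    simp only [Prod.mk.injEq]
    refine ⟨?_, trivial⟩
    obtain ⟨l,r,c,a,b,hl,ha,hA,hB⟩ := hm
    obtain ⟨l',r',c',a',b',hl',ha',hA',hB'⟩ := hm'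
    subst hl; subst hl'
    rcases lt_trichotomy l'.length l.length with hlt | heq | hgt
    · exact (aux22 hA' hB' ha hA hB hlt).elim
    · exact heq
    · exact (aux22 hA hB ha' hA' hB' hgt).elim
end
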